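/- arXiv:1305.5211 — 11 statements merged into one kernel-verified Lean document; each statement's English description precedes it below -/
import Mathlib

section
/- The entry of largest modulus of a complex symmetric positive definite matrix lies on its main diagonal; that is, max_{j,k} |a_{jk}| = max_j |a_{jj}|. -/
/-
Write `A = B + iC`. The `2 × 2` principal minors of `B` and `C`, then Cauchy–Schwarz in `ℝ²`, give
`|a_jk|² = b_jk² + c_jk² ≤ b_jj b_kk + c_jj c_kk ≤ |a_jj| |a_kk| ≤ (max_i |a_ii|)²`.
-/

open Matrix Complex Finset

/-- A complex matrix is CSPD (a Higham matrix) if it is `B + iC` with `B`, `C`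
real symmetric positive definite. -/
def IsCSPD {m : Type*} [Fintype m] [DecidableEq m] (A : Matrix m m ℂ) : Prop :=
  ∃ B C : Matrix m m ℝ, B.IsSymm ∧ B.PosDef ∧ C.IsSymm ∧ C.PosDef ∧
    A = B.map (fun x => (x : ℂ)) + Complex.I • C.map (fun x => (x : ℂ))

theorem abs_le_max_of_sq_le_mul {u s t : ℝ} (hs : 0 ≤ s) (ht : 0 ≤ t) (h : u ^ 2 ≤ s * t) :
    |u| ≤ max s t := by
  refine abs_le_of_sq_le_sq (h.trans ?_) (hs.trans (le_max_left s t))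
  rw [sq]
  exact mul_le_mul (le_max_left s t) (le_max_right s t) ht (hs.trans (le_max_left s t))

theorem Matrix.PosSemidef.sq_apply_le {m : Type*} [Fintype m] {B : Matrix m m ℝ}
    (hB : B.PosSemidef) (j k : m) : B j k ^ 2 ≤ B j j * B k k := by
  have hminor := (hB.submatrix ![j, k]).det_nonneg
  have hsymm : B k j = B j k := hB.1.apply j k
  simp only [det_fin_two, submatrix_apply, Matrix.cons_val_zero, Matrix.cons_val_one, hsymm]
    at hminor
  nlinarith

theorem Matrix.sq_norm_apply_le_of_posSemidef_re_im {m : Type*} [Fintype m] {A : Matrix m m ℂ}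
    (hre : (A.map re).PosSemidef) (him : (A.map im).PosSemidef) (j k : m) :
    ‖A j k‖ ^ 2 ≤ ‖A j j‖ * ‖A k k‖ :=
  calc ‖A j k‖ ^ 2 = (A j k).re ^ 2 + (A j k).im ^ 2 := by
          rw [Complex.sq_norm, normSq_apply]; ring
    _ ≤ (A j j).re * (A k k).re + (A j j).im * (A k k).im :=
          add_le_add (hre.sq_apply_le j k) (him.sq_apply_le j k)
    _ = (A j j * starRingEnd ℂ (A k k)).re := by simp
    _ ≤ ‖A j j‖ * ‖A k k‖ := by simpa using re_le_norm (A j j * starRingEnd ℂ (A k k))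

theorem Matrix.norm_apply_le_max_of_posSemidef_re_im {m : Type*} [Fintype m] {A : Matrix m m ℂ}
    (hre : (A.map re).PosSemidef) (him : (A.map im).PosSemidef) (j k : m) :
    ‖A j k‖ ≤ max ‖A j j‖ ‖A k k‖ := by
  simpa using abs_le_max_of_sq_le_mul (norm_nonneg _) (norm_nonneg _)
    (sq_norm_apply_le_of_posSemidef_re_im hre him j k)

namespace IsCSPD

variable {m : Type*} [Fintype m] [DecidableEq m] {A : Matrix m m ℂ}

theorem posDef_map_re (hA : IsCSPD A) : (A.map re).PosDef := by
  obtain ⟨B, C, -, hB, -, -, rfl⟩ := hA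
  convert hB
  ext j k
  simp

theorem posDef_map_im (hA : IsCSPD A) : (A.map im).PosDef := by
  obtain ⟨B, C, -, -, -, hC, rfl⟩ := hA
  convert hC
  ext j k
  simp

theorem norm_apply_le_max (hA : IsCSPD A) (j k : m) : ‖A j k‖ ≤ max ‖A j j‖ ‖A k k‖ :=
  norm_apply_le_max_of_posSemidef_re_im hA.posDef_map_re.posSemidef
    hA.posDef_map_im.posSemidef j k

end IsCSPD

/-- The entry of largest modulus of a CSPD matrix lies on its main diagonal:
`max_{j,k} |a_{jk}| = max_j |a_{jj}|`. -/
theorem cspd_max_on_diagonal {m : Type*} [Fintype m] [DecidableEq m] [Nonempty m]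
    (A : Matrix m m ℂ) (hA : IsCSPD A) :
    (Finset.univ.sup' Finset.univ_nonempty
        (fun p : m × m => ‖A p.1 p.2‖)) =
      Finset.univ.sup' Finset.univ_nonempty (fun j : m => ‖A j j‖) := by
  refine le_antisymm (Finset.sup'_le _ _ fun p _ => ?_) (Finset.sup'_le _ _ fun j _ => ?_)
  · exact (hA.norm_apply_le_max p.1 p.2).trans
      (max_le (le_sup' (fun j => ‖A j j‖) (mem_univ p.1))
        (le_sup' (fun j => ‖A j j‖) (mem_univ p.2)))
  · exact le_sup' (fun p : m × m => ‖A p.1 p.2‖) (mem_univ (j, j))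
end

section
/- Let B be an n×n Hermitian positive definite matrix with largest eigenvalue λ₁ and smallest eigenvalue λₙ. Then for all vectors x, y ∈ ℂⁿ with x*y = 0, one has |x* B y|² ≤ ((λ₁ − λₙ)/(λ₁ + λₙ))² (x* B x)(y* B y). -/
/-!
If `lo • 1 ≤ A ≤ hi • 1`, then `P = A - lo • 1` and `Q = hi • 1 - A` are positive semidefinite,
and for orthogonal `x`, `y` they have the same off-diagonal entry up to sign:
`x* P y = x* A y = -(x* Q y)`. Cauchy–Schwarz for `P` and `Q` bounds `|x* A y|²` both by `p r` and
by `q s`, where `p, q` and `r, s` are the diagonal entries of `P, Q` at `x` and at `y`. Since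
`(hi - lo) x* A x = hi p + lo q`, and similarly for `y`, the inequality
`p s + q r ≥ 2 √(p q r s) ≥ 2 |x* A y|²` finishes the proof.
-/

open Matrix Complex
open scoped ComplexOrder MatrixOrder

lemma add_sq_mul_le_of_le_mul_of_le_mul {α β p q r s t : ℝ} (hα : 0 ≤ α) (hβ : 0 ≤ β)
    (hp : 0 ≤ p) (hq : 0 ≤ q) (hr : 0 ≤ r) (hs : 0 ≤ s) (ht : 0 ≤ t)
    (htpr : t ≤ p * r) (htqs : t ≤ q * s) :
    (α + β) ^ 2 * t ≤ (α * p + β * q) * (α * r + β * s) := by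
  have hcross : 2 * t ≤ p * s + q * r := by
    have : (2 * t) ^ 2 ≤ (p * s + q * r) ^ 2 := by
      nlinarith [sq_nonneg (p * s - q * r), mul_le_mul htpr htqs ht (by positivity)]
    exact (pow_le_pow_iff_left₀ (by positivity) (by positivity) two_ne_zero).mp this
  nlinarith [mul_nonneg (mul_nonneg hα hβ) (sub_nonneg.2 hcross),
    mul_nonneg (sq_nonneg α) (sub_nonneg.2 htpr), mul_nonneg (sq_nonneg β) (sub_nonneg.2 htqs)]

namespace Matrix

variable {𝕜 n : Type*} [RCLike 𝕜] [Fintype n]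

lemma star_dotProduct_conjTranspose_mul_self_mulVec (C : Matrix n n 𝕜) (u v : n → 𝕜) :
    star u ⬝ᵥ (Cᴴ * C) *ᵥ v = inner 𝕜 (WithLp.toLp 2 (C *ᵥ u)) (WithLp.toLp 2 (C *ᵥ v)) := by
  rw [EuclideanSpace.inner_toLp_toLp, star_mulVec, dotProduct_comm (C *ᵥ v),
    ← dotProduct_mulVec, mulVec_mulVec]

theorem PosSemidef.norm_dotProduct_mulVec_sq_le {P : Matrix n n 𝕜} (hP : P.PosSemidef)
    (x y : n → 𝕜) :
    ‖star x ⬝ᵥ P *ᵥ y‖ ^ 2 ≤ RCLike.re (star x ⬝ᵥ P *ᵥ x) * RCLike.re (star y ⬝ᵥ P *ᵥ y) := by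
  classical
  obtain ⟨C, rfl⟩ := CStarAlgebra.nonneg_iff_eq_star_mul_self.mp hP.nonneg
  simp only [star_eq_conjTranspose, star_dotProduct_conjTranspose_mul_self_mulVec]
  rw [sq]
  nth_rw 2 [← norm_inner_symm]
  exact inner_mul_inner_self_le _ _

variable [DecidableEq n]

lemma IsHermitian.smul_one_le_of_le_eigenvalues {A : Matrix n n 𝕜} (hA : A.IsHermitian)
    {c : ℝ} (hc : ∀ i, c ≤ hA.eigenvalues i) : c • (1 : Matrix n n 𝕜) ≤ A := by
  rw [← Algebra.algebraMap_eq_smul_one, algebraMap_le_iff_le_spectrum hA.isSelfAdjoint,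
    hA.spectrum_real_eq_range_eigenvalues]
  rintro _ ⟨i, rfl⟩
  exact hc i

lemma IsHermitian.le_smul_one_of_eigenvalues_le {A : Matrix n n 𝕜} (hA : A.IsHermitian)
    {c : ℝ} (hc : ∀ i, hA.eigenvalues i ≤ c) : A ≤ c • (1 : Matrix n n 𝕜) := by
  rw [← Algebra.algebraMap_eq_smul_one, le_algebraMap_iff_spectrum_le hA.isSelfAdjoint,
    hA.spectrum_real_eq_range_eigenvalues]
  rintro _ ⟨i, rfl⟩
  exact hc i

theorem wielandt_of_smul_one_le_of_le_smul_one {A : Matrix n n 𝕜} {lo hi : ℝ} (hlo : 0 ≤ lo)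
    (hlohi : lo ≤ hi) (hloA : lo • 1 ≤ A) (hAhi : A ≤ hi • 1) {x y : n → 𝕜}
    (hxy : star x ⬝ᵥ y = 0) :
    (hi + lo) ^ 2 * ‖star x ⬝ᵥ A *ᵥ y‖ ^ 2 ≤
      (hi - lo) ^ 2 * RCLike.re (star x ⬝ᵥ A *ᵥ x) * RCLike.re (star y ⬝ᵥ A *ᵥ y) := by
  have hP : (A - lo • 1).PosSemidef := hloA
  have hQ : (hi • 1 - A).PosSemidef := hAhi
  have hPxy : star x ⬝ᵥ (A - lo • 1) *ᵥ y = star x ⬝ᵥ A *ᵥ y := by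
    rw [sub_mulVec, smul_mulVec, one_mulVec, dotProduct_sub, dotProduct_smul, hxy, smul_zero,
      sub_zero]
  have hQxy : star x ⬝ᵥ (hi • 1 - A) *ᵥ y = -(star x ⬝ᵥ A *ᵥ y) := by
    rw [sub_mulVec, smul_mulVec, one_mulVec, dotProduct_sub, dotProduct_smul, hxy, smul_zero,
      zero_sub]
  have hsplit : ∀ u : n → 𝕜, (hi - lo) * RCLike.re (star u ⬝ᵥ A *ᵥ u) =
      hi * RCLike.re (star u ⬝ᵥ (A - lo • 1) *ᵥ u) +
        lo * RCLike.re (star u ⬝ᵥ (hi • 1 - A) *ᵥ u) := by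
    intro u
    simp only [sub_mulVec, smul_mulVec, one_mulVec, dotProduct_sub, dotProduct_smul, map_sub,
      RCLike.smul_re]
    ring
  have hCSP := hP.norm_dotProduct_mulVec_sq_le x y
  have hCSQ := hQ.norm_dotProduct_mulVec_sq_le x y
  rw [hPxy] at hCSP
  rw [hQxy, norm_neg] at hCSQ
  calc (hi + lo) ^ 2 * ‖star x ⬝ᵥ A *ᵥ y‖ ^ 2 ≤ _ :=
        add_sq_mul_le_of_le_mul_of_le_mul (hlo.trans hlohi) hlo (hP.re_dotProduct_nonneg x)
          (hQ.re_dotProduct_nonneg x) (hP.re_dotProduct_nonneg y) (hQ.re_dotProduct_nonneg y)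
          (sq_nonneg _) hCSP hCSQ
    _ = _ := by rw [← hsplit, ← hsplit]; ring

end Matrix

/-- Wielandt's inequality: for a Hermitian positive definite matrix `B` with
largest eigenvalue `λ₁` and smallest eigenvalue `λₙ`, and orthogonal vectors
`x`, `y`, we have `|x* B y|² ≤ ((λ₁-λₙ)/(λ₁+λₙ))² (x* B x)(y* B y)`. -/
theorem wielandt_inequality {m : Type*} [Fintype m] [DecidableEq m] [Nonempty m]
    (B : Matrix m m ℂ) (hB : B.PosDef)
    (l1 ln : ℝ)
    (hl1 : l1 = ⨆ i, hB.isHermitian.eigenvalues i)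
    (hln : ln = ⨅ i, hB.isHermitian.eigenvalues i)
    (x y : m → ℂ) (hxy : star x ⬝ᵥ y = 0) :
    ‖star x ⬝ᵥ B.mulVec y‖ ^ 2 ≤
      ((l1 - ln) / (l1 + ln)) ^ 2 * (star x ⬝ᵥ B.mulVec x).re *
        (star y ⬝ᵥ B.mulVec y).re := by
  have hH := hB.isHermitian
  have hfin := Set.finite_range hH.eigenvalues
  have hln_le : ∀ i, ln ≤ hH.eigenvalues i := fun i => hln ▸ ciInf_le hfin.bddBelow i
  have hle_l1 : ∀ i, hH.eigenvalues i ≤ l1 := fun i => hl1 ▸ le_ciSup hfin.bddAbove i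
  have hln_pos : 0 < ln := by
    obtain ⟨i, hi⟩ := exists_eq_ciInf_of_finite (f := hH.eigenvalues)
    exact hln ▸ hi ▸ hB.eigenvalues_pos i
  have hln_l1 : ln ≤ l1 := (hln_le (Classical.arbitrary m)).trans (hle_l1 _)
  have hbound := wielandt_of_smul_one_le_of_le_smul_one hln_pos.le hln_l1
    (hH.smul_one_le_of_le_eigenvalues hln_le)
    (hH.le_smul_one_of_eigenvalues_le hle_l1) hxy
  rw [div_pow, div_mul_eq_mul_div, div_mul_eq_mul_div, le_div_iff₀ (by nlinarith), mul_comm]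
  exact hbound
end

section
/- Let B be an n×n Hermitian positive definite matrix with largest eigenvalue λ₁ and smallest eigenvalue λₙ, and let X be an n×p matrix with X* X = I_p. Then X* B⁻¹ X ≤ ((λ₁ + λₙ)² / (4 λ₁ λₙ)) (X* B X)⁻¹ in the Loewner order. -/
/-!
Both steps are scalar inequalities lifted by the continuous functional calculus. For `λ` in
`[λₙ, λ₁]`, `(λ₁ - λ)(λ - λₙ) ≥ 0` reads `λ⁻¹ ≤ (λ₁ + λₙ - λ) / (λ₁ λₙ)`, so
`B⁻¹ ≤ ((λ₁ + λₙ) - B) / (λ₁ λₙ)`; compressing by `X` (with `X* X = I`) gives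
`X* B⁻¹ X ≤ ((λ₁ + λₙ) - X* B X) / (λ₁ λₙ)`. Finally `(2 k μ - α)² ≥ 0` reads
`α - k μ ≤ α² / (4 k) μ⁻¹` for `μ > 0`, which applied to `X* B X` bounds the right-hand side by
`(λ₁ + λₙ)² / (4 λ₁ λₙ) (X* B X)⁻¹`.
-/

open Matrix
open scoped ComplexOrder

section CFC

variable {A : Type*} [Ring A] [StarRing A] [TopologicalSpace A] [Algebra ℝ A]
  [ContinuousFunctionalCalculus ℝ A IsSelfAdjoint]

lemma cfc_const_add_mul_add_mul_inv {a : A} (ha : IsSelfAdjoint a) (h0 : 0 ∉ spectrum ℝ a)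
    (α β γ : ℝ) :
    cfc (fun x => α + β * x + γ * x⁻¹) a = algebraMap ℝ A α + β • a + γ • Ring.inverse a := by
  have hcfc_inv : cfc (fun x : ℝ => x⁻¹) a = Ring.inverse a := by
    have := cfc_inv (id : ℝ → ℝ) a (fun x hx hx0 => h0 (hx0 ▸ hx))
    rwa [cfc_id ℝ a] at this
  rw [cfc_add .., cfc_add .., cfc_const_mul .., cfc_const_mul .., cfc_const .., cfc_id' ..,
    hcfc_inv]

variable [PartialOrder A] [StarOrderedRing A]

lemma ringInverse_le_of_spectrum_subset_Icc {a : A} (ha : IsSelfAdjoint a) {m M : ℝ}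
    (hm : 0 < m) (hspec : spectrum ℝ a ⊆ Set.Icc m M) :
    Ring.inverse a ≤ algebraMap ℝ A ((M + m) / (M * m)) - (M * m)⁻¹ • a := by
  have h0 : 0 ∉ spectrum ℝ a := fun h => by linarith [(hspec h).1]
  rw [← sub_nonneg]
  convert cfc_nonneg (a := a) (f := fun x => (M + m) / (M * m) + (-(M * m)⁻¹) * x + (-1) * x⁻¹)
    fun x hx => ?_ using 1
  · rw [cfc_const_add_mul_add_mul_inv ha h0]
    simp only [neg_smul, one_smul]
    abel
  · obtain ⟨hmx, hxM⟩ := hspec hx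
    have hx0 : 0 < x := hm.trans_le hmx
    have hM : 0 < M := hx0.trans_le hxM
    have key : (M + m) / (M * m) + (-(M * m)⁻¹) * x + (-1) * x⁻¹
        = (M - x) * (x - m) / (M * m * x) := by
      field_simp
      ring
    rw [key]
    exact div_nonneg (mul_nonneg (by linarith) (by linarith)) (by positivity)

lemma algebraMap_sub_smul_le_smul_ringInverse {c : A} (hc : IsSelfAdjoint c)
    (hspec : spectrum ℝ c ⊆ Set.Ioi 0) (α : ℝ) {k : ℝ} (hk : 0 < k) :
    algebraMap ℝ A α - k • c ≤ (α ^ 2 / (4 * k)) • Ring.inverse c := by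
  have h0 : 0 ∉ spectrum ℝ c := fun h => lt_irrefl (0 : ℝ) (hspec h)
  rw [← sub_nonneg]
  convert cfc_nonneg (a := c) (f := fun x => -α + k * x + α ^ 2 / (4 * k) * x⁻¹)
    fun x hx => ?_ using 1
  · rw [cfc_const_add_mul_add_mul_inv hc h0, map_neg]
    abel
  · have hx0 : 0 < x := hspec hx
    have key : -α + k * x + α ^ 2 / (4 * k) * x⁻¹ = (2 * k * x - α) ^ 2 / (4 * k * x) := by
      field_simp
      ring
    rw [key]
    positivity

end CFC

open scoped MatrixOrder

namespace Matrix

variable {n m 𝕜 : Type*} [Fintype n] [RCLike 𝕜]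

lemma conjTranspose_mul_mul_le_conjTranspose_mul_mul [Fintype m] {A B : Matrix n n 𝕜}
    (h : A ≤ B) (X : Matrix n m 𝕜) : Xᴴ * A * X ≤ Xᴴ * B * X := by
  rw [le_iff, ← Matrix.sub_mul, ← Matrix.mul_sub]
  exact h.conjTranspose_mul_mul_same X

variable [DecidableEq n]

lemma IsHermitian.spectrum_real_subset_Icc {A : Matrix n n 𝕜} (hA : A.IsHermitian) :
    spectrum ℝ A ⊆ Set.Icc (⨅ i, hA.eigenvalues i) (⨆ i, hA.eigenvalues i) := by
  rw [hA.spectrum_real_eq_range_eigenvalues]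
  rintro _ ⟨i, rfl⟩
  exact ⟨ciInf_le (Set.finite_range _).bddBelow i, le_ciSup (Set.finite_range _).bddAbove i⟩

lemma PosDef.spectrum_real_subset_Ioi {A : Matrix n n 𝕜} (hA : A.PosDef) :
    spectrum ℝ A ⊆ Set.Ioi 0 := by
  rw [hA.isHermitian.spectrum_real_eq_range_eigenvalues]
  rintro _ ⟨i, rfl⟩
  exact hA.eigenvalues_pos i

lemma PosDef.iInf_eigenvalues_pos [Nonempty n] {A : Matrix n n 𝕜} (hA : A.PosDef) :
    0 < ⨅ i, hA.isHermitian.eigenvalues i := by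
  obtain ⟨i, hi⟩ := exists_eq_ciInf_of_finite (f := hA.isHermitian.eigenvalues)
  exact hi ▸ hA.eigenvalues_pos i

end Matrix

/-- Kantorovich-type inequality: if `B` is Hermitian positive definite with
largest eigenvalue `λ₁` and smallest eigenvalue `λₙ`, and `X* X = I`, then
`X* B⁻¹ X ≤ ((λ₁+λₙ)²/(4λ₁λₙ)) (X* B X)⁻¹` in the Loewner order. -/
theorem kantorovich_type_inequality {m p : Type*} [Fintype m] [DecidableEq m]
    [Fintype p] [DecidableEq p]
    (B : Matrix m m ℂ) (hB : B.PosDef)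
    (l1 ln : ℝ)
    (hl1 : l1 = ⨆ i, hB.isHermitian.eigenvalues i)
    (hln : ln = ⨅ i, hB.isHermitian.eigenvalues i)
    (X : Matrix m p ℂ) (hX : Xᴴ * X = 1) :
    ((((l1 + ln) ^ 2 / (4 * l1 * ln) : ℝ) : ℂ) • (Xᴴ * B * X)⁻¹
        - Xᴴ * B⁻¹ * X).PosSemidef := by
  -- over an empty `m` the eigenvalue bounds are the junk values `⨆ ∅ = ⨅ ∅ = 0`
  rcases isEmpty_or_nonempty m with hm | hm
  · have : Subsingleton (Matrix p p ℂ) := subsingleton_of_zero_eq_one <| hX ▸ by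
      ext i j; simp [Matrix.mul_apply]
    convert (PosSemidef.zero : (0 : Matrix p p ℂ).PosSemidef)
  have hln0 : 0 < ln := hln ▸ hB.iInf_eigenvalues_pos
  have hl10 : 0 < l1 := hln0.trans_le <| hl1 ▸ hln ▸
    ciInf_le_ciSup (Set.finite_range _).bddBelow (Set.finite_range _).bddAbove
  have hXinj : Function.Injective X.mulVec := Function.LeftInverse.injective (g := Xᴴ.mulVec)
    fun v => by rw [mulVec_mulVec, hX, one_mulVec]
  have hA : (Xᴴ * B * X).PosDef := hB.conjTranspose_mul_mul_same hXinj
  have hBinv := ringInverse_le_of_spectrum_subset_Icc hB.isHermitian.isSelfAdjoint hln0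
    (hl1 ▸ hln ▸ hB.isHermitian.spectrum_real_subset_Icc)
  have h1 := conjTranspose_mul_mul_le_conjTranspose_mul_mul hBinv X
  rw [Matrix.mul_sub, Matrix.sub_mul, Algebra.algebraMap_eq_smul_one, Matrix.mul_smul,
    Matrix.smul_mul, Matrix.mul_one, hX, Matrix.mul_smul, Matrix.smul_mul] at h1
  have h2 := algebraMap_sub_smul_le_smul_ringInverse hA.isHermitian.isSelfAdjoint
    hA.spectrum_real_subset_Ioi ((l1 + ln) / (l1 * ln)) (inv_pos.mpr (mul_pos hl10 hln0))
  have hcoef : ((l1 + ln) / (l1 * ln)) ^ 2 / (4 * (l1 * ln)⁻¹) = (l1 + ln) ^ 2 / (4 * l1 * ln) := by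
    field_simp
  rw [hcoef, Algebra.algebraMap_eq_smul_one] at h2
  rw [← nonsing_inv_eq_ringInverse] at h1 h2
  rw [Complex.coe_smul]
  exact le_iff.mp (h1.trans h2)
end

section
/- Let A = B + iC with B = B*, C = C* be partitioned into 2×2 blocks conformally, with B₁₁ and C₁₁ invertible and A₁₁ invertible. Then the Schur complement satisfies A/A₁₁ = B/B₁₁ + i(C/C₁₁) + X (B₁₁⁻¹ − i C₁₁⁻¹)⁻¹ X*, where X = B₂₁ B₁₁⁻¹ − C₂₁ C₁₁⁻¹. -/
open Matrix Complex

/-!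
Since `B₁₁⁻¹ A₁₁ C₁₁⁻¹ = C₁₁⁻¹ + i B₁₁⁻¹`, the middle factor is `(B₁₁⁻¹ - i C₁₁⁻¹)⁻¹ = i C₁₁ A₁₁⁻¹ B₁₁`,
and Hermitianity gives `X* = B₁₁⁻¹ B₁₂ - C₁₁⁻¹ C₁₂`. Write `A₂₁ = P B₁₁ + i Q C₁₁` and
`A₁₂ = B₁₁ R + i C₁₁ S`, so that `X = P - Q` and `X* = R - S`. Then `A₂₁ = P A₁₁ - i X C₁₁` and
`A₁₂ = A₁₁ S + B₁₁ X*`, and multiplying out `A₂₁ A₁₁⁻¹ A₁₂`, the inverse `A₁₁⁻¹` only survives in the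
cross term `i X (C₁₁ A₁₁⁻¹ B₁₁) X*`.
-/

namespace Matrix

variable {α : Type*} [CommRing α] {l m n : Type*} [Fintype n] [DecidableEq n]

theorem mul_add_smul_mul_inv_mul_add_smul_mul (s : α) {b c : Matrix n n α}
    (ha : IsUnit (b + s • c)) (P Q : Matrix m n α) (R S : Matrix n l α) :
    (P * b + s • (Q * c)) * (b + s • c)⁻¹ * (b * R + s • (c * S)) =
      P * b * R + s • (Q * c * S) - (P - Q) * (s • (c * (b + s • c)⁻¹ * b)) * (R - S) := by
  set a := b + s • c with ha_def
  have ha_det : IsUnit a.det := (isUnit_iff_isUnit_det a).mp ha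
  have hleft : P * b + s • (Q * c) = P * a - s • ((P - Q) * c) := by
    simp only [ha_def, Matrix.mul_add, Matrix.sub_mul, Matrix.mul_smul, smul_sub]
    abel
  have hright : b * R + s • (c * S) = a * S + b * (R - S) := by
    simp only [ha_def, Matrix.add_mul, Matrix.mul_sub, Matrix.smul_mul]
    abel
  rw [hleft, hright]
  simp only [Matrix.sub_mul, Matrix.mul_add, Matrix.mul_assoc, Matrix.smul_mul, Matrix.mul_smul,
    mul_nonsing_inv_cancel_left _ _ ha_det, nonsing_inv_mul_cancel_left _ _ ha_det]
  simp only [ha_def, Matrix.add_mul, Matrix.mul_add, Matrix.mul_sub, Matrix.smul_mul,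
    Matrix.mul_smul]
  module

theorem add_smul_mul_inv_mul_add_smul (s : α) {b c : Matrix n n α} (hb : IsUnit b)
    (hc : IsUnit c) (ha : IsUnit (b + s • c)) (u v : Matrix m n α) (w z : Matrix n l α) :
    (u + s • v) * (b + s • c)⁻¹ * (w + s • z) =
      u * b⁻¹ * w + s • (v * c⁻¹ * z) -
        (u * b⁻¹ - v * c⁻¹) * (s • (c * (b + s • c)⁻¹ * b)) * (b⁻¹ * w - c⁻¹ * z) := by
  rw [isUnit_iff_isUnit_det] at hb hc
  have := mul_add_smul_mul_inv_mul_add_smul_mul s ha (u * b⁻¹) (v * c⁻¹) (b⁻¹ * w) (c⁻¹ * z)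
  simpa only [nonsing_inv_mul_cancel_right _ _ hb, nonsing_inv_mul_cancel_right _ _ hc,
    mul_nonsing_inv_cancel_left _ _ hb, mul_nonsing_inv_cancel_left _ _ hc, Matrix.mul_assoc]
    using this

theorem inv_inv_add_smul_inv {s t : α} (hst : s * t = 1) {b c : Matrix n n α} (hb : IsUnit b)
    (hc : IsUnit c) (ha : IsUnit (b + s • c)) :
    (b⁻¹ + t • c⁻¹)⁻¹ = s • (c * (b + s • c)⁻¹ * b) := by
  rw [isUnit_iff_isUnit_det] at hb hc ha
  refine inv_eq_right_inv ?_
  calc (b⁻¹ + t • c⁻¹) * (s • (c * (b + s • c)⁻¹ * b))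
      = b⁻¹ * (b + s • c) * (b + s • c)⁻¹ * b := by
        simp only [Matrix.add_mul, Matrix.mul_add, Matrix.smul_mul, Matrix.mul_smul, smul_add,
          smul_smul, hst, one_smul, Matrix.mul_assoc, nonsing_inv_mul_cancel_left _ _ hc,
          nonsing_inv_mul_cancel_left _ _ hb]
        abel
    _ = 1 := by
        rw [mul_nonsing_inv_cancel_right _ _ ha, nonsing_inv_mul _ hb]

end Matrix

theorem schur_complement_hermitian_decomposition_general {p q : Type*}
    [Fintype p] [DecidableEq p]
    (A11 : Matrix p p ℂ) (A12 : Matrix p q ℂ) (A21 : Matrix q p ℂ) (A22 : Matrix q q ℂ)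
    (B11 : Matrix p p ℂ) (B12 : Matrix p q ℂ) (B21 : Matrix q p ℂ) (B22 : Matrix q q ℂ)
    (C11 : Matrix p p ℂ) (C12 : Matrix p q ℂ) (C21 : Matrix q p ℂ) (C22 : Matrix q q ℂ)
    (hB : (Matrix.fromBlocks B11 B12 B21 B22).IsHermitian)
    (hC : (Matrix.fromBlocks C11 C12 C21 C22).IsHermitian)
    (hA : Matrix.fromBlocks A11 A12 A21 A22 =
      Matrix.fromBlocks B11 B12 B21 B22 + Complex.I • Matrix.fromBlocks C11 C12 C21 C22)
    (h11B : IsUnit B11) (h11C : IsUnit C11) (h11A : IsUnit A11) :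
    A22 - A21 * A11⁻¹ * A12 =
      (B22 - B21 * B11⁻¹ * B12) + Complex.I • (C22 - C21 * C11⁻¹ * C12) +
        (B21 * B11⁻¹ - C21 * C11⁻¹) * (B11⁻¹ - Complex.I • C11⁻¹)⁻¹ *
          (B21 * B11⁻¹ - C21 * C11⁻¹)ᴴ := by
  obtain ⟨hB11, -, hB21, -⟩ := isHermitian_fromBlocks_iff.mp hB
  obtain ⟨hC11, -, hC21, -⟩ := isHermitian_fromBlocks_iff.mp hC
  rw [fromBlocks_smul, fromBlocks_add, fromBlocks_inj] at hA
  obtain ⟨rfl, rfl, rfl, rfl⟩ := hA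
  have hX : (B21 * B11⁻¹ - C21 * C11⁻¹)ᴴ = B11⁻¹ * B12 - C11⁻¹ * C12 := by
    simp only [conjTranspose_sub, conjTranspose_mul, conjTranspose_nonsing_inv, hB11.eq, hC11.eq,
      hB21, hC21]
  have hM : (B11⁻¹ - I • C11⁻¹)⁻¹ = I • (C11 * (B11 + I • C11)⁻¹ * B11) := by
    rw [sub_eq_add_neg, ← neg_smul]
    exact inv_inv_add_smul_inv (by simp) h11B h11C h11A
  rw [hX, hM, add_smul_mul_inv_mul_add_smul I h11B h11C h11A]
  module

/-- Schur complement formula for the Hermitian (Toeplitz) decomposition: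
if `A = B + iC` with `B`, `C` Hermitian, partitioned conformally into 2×2
blocks with `B₁₁`, `C₁₁`, `A₁₁` invertible, then
`A/A₁₁ = B/B₁₁ + i (C/C₁₁) + X (B₁₁⁻¹ - i C₁₁⁻¹)⁻¹ X*` where
`X = B₂₁ B₁₁⁻¹ - C₂₁ C₁₁⁻¹`. -/
theorem schur_complement_hermitian_decomposition {p q : Type*}
    [Fintype p] [DecidableEq p] [Fintype q] [DecidableEq q]
    (A11 : Matrix p p ℂ) (A12 : Matrix p q ℂ) (A21 : Matrix q p ℂ) (A22 : Matrix q q ℂ)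
    (B11 : Matrix p p ℂ) (B12 : Matrix p q ℂ) (B21 : Matrix q p ℂ) (B22 : Matrix q q ℂ)
    (C11 : Matrix p p ℂ) (C12 : Matrix p q ℂ) (C21 : Matrix q p ℂ) (C22 : Matrix q q ℂ)
    (hB : (Matrix.fromBlocks B11 B12 B21 B22).IsHermitian)
    (hC : (Matrix.fromBlocks C11 C12 C21 C22).IsHermitian)
    (hA : Matrix.fromBlocks A11 A12 A21 A22 =
      Matrix.fromBlocks B11 B12 B21 B22 + Complex.I • Matrix.fromBlocks C11 C12 C21 C22)
    (h11B : IsUnit B11) (h11C : IsUnit C11) (h11A : IsUnit A11) :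
    A22 - A21 * A11⁻¹ * A12 =
      (B22 - B21 * B11⁻¹ * B12) + Complex.I • (C22 - C21 * C11⁻¹ * C12) +
        (B21 * B11⁻¹ - C21 * C11⁻¹) * (B11⁻¹ - Complex.I • C11⁻¹)⁻¹ *
          (B21 * B11⁻¹ - C21 * C11⁻¹)ᴴ :=
  schur_complement_hermitian_decomposition_general A11 A12 A21 A22 B11 B12 B21 B22 C11 C12 C21 C22
    hB hC hA h11B h11C h11A
end

section
/- Let A = B + iC be a generalized Higham matrix (B, C Hermitian positive definite), partitioned into 2×2 blocks conformally. If A/A₁₁ = R + iS is the Hermitian decomposition of the Schur complement, then R ≥ B/B₁₁ and S ≥ C/C₁₁ in the Loewner order. -/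
open Matrix Complex
open scoped ComplexOrder

/-!
Put `x = -A₁₁⁻¹ A₁₂ u` and `w = (x, u)`. Then `A w = (0, (A/A₁₁) u)`, so
`w* A w = u* (A/A₁₁) u`. All four quadratic forms `w* B w`, `w* C w`, `u* R u`, `u* S u` are
real, so comparing real and imaginary parts gives `w* B w = u* R u` and `w* C w = u* S u`.
Finally `w* B w ≥ u* (B/B₁₁) u` for every `x`, the gap being `y* B₁₁ y` with
`y = x + B₁₁⁻¹ B₁₂ u`; likewise for `C`.
-/

namespace Matrix

variable {R m n : Type*} [CommRing R] [Fintype m] [DecidableEq m] [Fintype n]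

noncomputable def schurVec (A : Matrix m m R) (B : Matrix m n R) (u : n → R) : m ⊕ n → R :=
  -((A⁻¹ * B) *ᵥ u) ⊕ᵥ u

theorem fromBlocks_mulVec_schurVec (A : Matrix m m R) (B : Matrix m n R) (C : Matrix n m R)
    (D : Matrix n n R) (hA : IsUnit A) (u : n → R) :
    fromBlocks A B C D *ᵥ schurVec A B u = (0 : m → R) ⊕ᵥ (D - C * A⁻¹ * B) *ᵥ u := by
  have hdet : IsUnit A.det := (isUnit_iff_isUnit_det A).mp hA
  simp only [schurVec, fromBlocks_mulVec, Sum.elim_comp_inl, Sum.elim_comp_inr, mulVec_neg,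
    mulVec_mulVec, mul_nonsing_inv_cancel_left _ _ hdet, neg_add_cancel, sub_mulVec,
    Matrix.mul_assoc]
  congr 1
  abel

theorem star_dotProduct_fromBlocks_mulVec_schurVec [StarRing R] (A : Matrix m m R)
    (B : Matrix m n R) (C : Matrix n m R) (D : Matrix n n R) (hA : IsUnit A) (u : n → R) :
    star (schurVec A B u) ⬝ᵥ fromBlocks A B C D *ᵥ schurVec A B u =
      star u ⬝ᵥ (D - C * A⁻¹ * B) *ᵥ u := by
  rw [fromBlocks_mulVec_schurVec A B C D hA, schurVec, Function.star_sumElim,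
    sumElim_dotProduct_sumElim, dotProduct_zero, zero_add]

theorem star_dotProduct_schur_complement_le [PartialOrder R] [StarRing R]
    [IsOrderedAddMonoid R] {A : Matrix m m R} (hA : A.PosSemidef) [Invertible A]
    (B : Matrix m n R) (D : Matrix n n R) (x : m → R) (u : n → R) :
    star u ⬝ᵥ (D - Bᴴ * A⁻¹ * B) *ᵥ u ≤ star (x ⊕ᵥ u) ⬝ᵥ fromBlocks A B Bᴴ D *ᵥ (x ⊕ᵥ u) := by
  rw [dotProduct_mulVec (star (x ⊕ᵥ u)), schur_complement_eq₁₁ B D x u hA.1,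
    ← dotProduct_mulVec, ← dotProduct_mulVec]
  exact le_add_of_nonneg_left (hA.dotProduct_mulVec_nonneg _)

theorem PosSemidef.sub_of_forall_dotProduct_mulVec_le [PartialOrder R] [StarRing R]
    [IsOrderedAddMonoid R] {M N : Matrix n n R} (hM : M.IsHermitian) (hN : N.IsHermitian)
    (h : ∀ x, star x ⬝ᵥ M *ᵥ x ≤ star x ⬝ᵥ N *ᵥ x) : (N - M).PosSemidef :=
  .of_dotProduct_mulVec_nonneg (hN.sub hM) fun x => by
    rw [sub_mulVec, dotProduct_sub, sub_nonneg]
    exact h x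

end Matrix

theorem Complex.eq_and_eq_of_add_I_mul_eq {a b c d : ℂ} (ha : a.im = 0) (hb : b.im = 0)
    (hc : c.im = 0) (hd : d.im = 0) (h : a + I * b = c + I * d) : a = c ∧ b = d := by
  have hre := congrArg re h
  have him := congrArg im h
  simp only [add_re, add_im, I_mul_re, I_mul_im, ha, hb, hc, hd, neg_zero, add_zero,
    zero_add] at hre him
  exact ⟨Complex.ext hre (ha.trans hc.symm), Complex.ext him (hb.trans hd.symm)⟩

/-- For a generalized Higham matrix `A = B + iC` (with `B`, `C` Hermitian
positive definite), partitioned conformally into 2×2 blocks, if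
`A/A₁₁ = R + iS` is the Hermitian decomposition of the Schur complement, then
`R ≥ B/B₁₁` and `S ≥ C/C₁₁` in the Loewner order. -/
theorem schur_complement_parts_ge {p q : Type*}
    [Fintype p] [DecidableEq p] [Fintype q] [DecidableEq q]
    (A11 : Matrix p p ℂ) (A12 : Matrix p q ℂ) (A21 : Matrix q p ℂ) (A22 : Matrix q q ℂ)
    (B11 : Matrix p p ℂ) (B12 : Matrix p q ℂ) (B21 : Matrix q p ℂ) (B22 : Matrix q q ℂ)
    (C11 : Matrix p p ℂ) (C12 : Matrix p q ℂ) (C21 : Matrix q p ℂ) (C22 : Matrix q q ℂ)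
    (hB : (Matrix.fromBlocks B11 B12 B21 B22).PosDef)
    (hC : (Matrix.fromBlocks C11 C12 C21 C22).PosDef)
    (hA : Matrix.fromBlocks A11 A12 A21 A22 =
      Matrix.fromBlocks B11 B12 B21 B22 + Complex.I • Matrix.fromBlocks C11 C12 C21 C22)
    (h11A : IsUnit A11)
    (R S : Matrix q q ℂ) (hR : R.IsHermitian) (hS : S.IsHermitian)
    (hRS : A22 - A21 * A11⁻¹ * A12 = R + Complex.I • S) :
    (R - (B22 - B21 * B11⁻¹ * B12)).PosSemidef ∧
      (S - (C22 - C21 * C11⁻¹ * C12)).PosSemidef := by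
  obtain ⟨hB11h, hB21, -, -⟩ := isHermitian_fromBlocks_iff.mp hB.1
  obtain ⟨hC11h, hC21, -, -⟩ := isHermitian_fromBlocks_iff.mp hC.1
  subst hB21 hC21
  have hB11 : B11.PosDef := hB.submatrix Sum.inl_injective
  have hC11 : C11.PosDef := hC.submatrix Sum.inl_injective
  let _ := hB11.isUnit.invertible
  let _ := hC11.isUnit.invertible
  have parts (u : q → ℂ) :
      let w := schurVec A11 A12 u
      star w ⬝ᵥ fromBlocks B11 B12 B12ᴴ B22 *ᵥ w = star u ⬝ᵥ R *ᵥ u ∧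
        star w ⬝ᵥ fromBlocks C11 C12 C12ᴴ C22 *ᵥ w = star u ⬝ᵥ S *ᵥ u := by
    intro w
    have hquad := star_dotProduct_fromBlocks_mulVec_schurVec A11 A12 A21 A22 h11A u
    rw [hA, hRS] at hquad
    simp only [add_mulVec, smul_mulVec, dotProduct_add, dotProduct_smul, smul_eq_mul] at hquad
    exact Complex.eq_and_eq_of_add_I_mul_eq (hB.1.im_star_dotProduct_mulVec_self w)
      (hC.1.im_star_dotProduct_mulVec_self w) (hR.im_star_dotProduct_mulVec_self u)
      (hS.im_star_dotProduct_mulVec_self u) hquad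
  refine ⟨PosSemidef.sub_of_forall_dotProduct_mulVec_le
      ((IsHermitian.fromBlocks₁₁ _ _ hB11h).mp hB.1) hR fun u => ?_,
    PosSemidef.sub_of_forall_dotProduct_mulVec_le
      ((IsHermitian.fromBlocks₁₁ _ _ hC11h).mp hC.1) hS fun u => ?_⟩
  · exact (star_dotProduct_schur_complement_le hB11.posSemidef _ _ _ u).trans_eq (parts u).1
  · exact (star_dotProduct_schur_complement_le hC11.posSemidef _ _ _ u).trans_eq (parts u).2
end

section
/- Let A = B + iC be a generalized Higham matrix with A₁₁ an invertible leading principal block in a 2×2 block partition. Then A₁₁ is invertible and the Schur complement A/A₁₁ is again a generalized Higham matrix (its Hermitian and skew-Hermitian-imaginary parts are both positive definite). -/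
/-!
The quadratic form `x ↦ x* M x` of `M = R + iS` has real part `x* R x` and imaginary part
`x* S x`, so a complex matrix is a generalized Higham matrix exactly when its numerical range
lies in the open first quadrant; conversely `R` and `S` are then the real and imaginary parts
`(M + M*)/2` and `(M - M*)/(2i)`. This property passes to the blocks that matter: the form of `A`
at `(v, 0)` is the form of `A₁₁` at `v`, which forces `A₁₁` to be invertible, and its form at
`(-A₁₁⁻¹A₁₂x, x)` is the form of the Schur complement at `x`.
-/

open Matrix Complex
open scoped ComplexOrder ComplexStarModule

namespace Matrix

section QuadraticForm

variable {n : Type*} [Fintype n]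

lemma star_dotProduct_conjTranspose_mulVec {α : Type*} [CommSemiring α] [StarRing α]
    (M : Matrix n n α) (x : n → α) :
    star x ⬝ᵥ (Mᴴ *ᵥ x) = star (star x ⬝ᵥ (M *ᵥ x)) := by
  rw [star_dotProduct, star_mulVec, conjTranspose_conjTranspose, dotProduct_mulVec]

lemma star_dotProduct_realPart_mulVec (M : Matrix n n ℂ) (x : n → ℂ) :
    star x ⬝ᵥ ((ℜ M : Matrix n n ℂ) *ᵥ x) = (star x ⬝ᵥ (M *ᵥ x)).re := by
  rw [← Complex.coe_realPart, realPart_apply_coe, realPart_apply_coe, smul_mulVec,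
    dotProduct_smul, add_mulVec, dotProduct_add, star_eq_conjTranspose,
    star_dotProduct_conjTranspose_mulVec]

lemma star_dotProduct_imaginaryPart_mulVec (M : Matrix n n ℂ) (x : n → ℂ) :
    star x ⬝ᵥ ((ℑ M : Matrix n n ℂ) *ᵥ x) = (star x ⬝ᵥ (M *ᵥ x)).im := by
  have h := star_dotProduct_realPart_mulVec (I • M) x
  rw [realPart_I_smul, NegMemClass.coe_neg, neg_mulVec, dotProduct_neg, smul_mulVec,
    dotProduct_smul, smul_eq_mul, I_mul_re, ofReal_neg, neg_inj] at h
  exact h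

lemma posDef_realPart_iff (M : Matrix n n ℂ) :
    (ℜ M : Matrix n n ℂ).PosDef ↔ ∀ x ≠ 0, 0 < (star x ⬝ᵥ (M *ᵥ x)).re := by
  simp only [posDef_iff_dotProduct_mulVec, star_dotProduct_realPart_mulVec, zero_lt_real,
    isHermitian_iff_isSelfAdjoint.2 (ℜ M).2, true_and, ne_eq]

lemma posDef_imaginaryPart_iff (M : Matrix n n ℂ) :
    (ℑ M : Matrix n n ℂ).PosDef ↔ ∀ x ≠ 0, 0 < (star x ⬝ᵥ (M *ᵥ x)).im := by
  simp only [posDef_iff_dotProduct_mulVec, star_dotProduct_imaginaryPart_mulVec, zero_lt_real,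
    isHermitian_iff_isSelfAdjoint.2 (ℑ M).2, true_and, ne_eq]

theorem exists_posDef_add_I_smul_posDef_iff (M : Matrix n n ℂ) :
    (∃ R S : Matrix n n ℂ, R.PosDef ∧ S.PosDef ∧ M = R + I • S) ↔
      ∀ x ≠ 0, 0 < (star x ⬝ᵥ (M *ᵥ x)).re ∧ 0 < (star x ⬝ᵥ (M *ᵥ x)).im := by
  constructor
  · rintro ⟨R, S, hR, hS, rfl⟩ x hx
    obtain ⟨hRre, hRim⟩ := pos_iff.1 (hR.dotProduct_mulVec_pos hx)
    obtain ⟨hSre, hSim⟩ := pos_iff.1 (hS.dotProduct_mulVec_pos hx)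
    simp only [add_mulVec, smul_mulVec, dotProduct_add, dotProduct_smul, smul_eq_mul, add_re,
      add_im, I_mul_re, I_mul_im, ← hRim, ← hSim]
    constructor <;> linarith
  · intro h
    exact ⟨ℜ M, ℑ M, (posDef_realPart_iff M).2 fun x hx ↦ (h x hx).1,
      (posDef_imaginaryPart_iff M).2 fun x hx ↦ (h x hx).2,
      (realPart_add_I_smul_imaginaryPart M).symm⟩

lemma isUnit_of_star_dotProduct_mulVec_ne_zero {K : Type*} [DecidableEq n] [Field K] [Star K]
    {M : Matrix n n K} (h : ∀ x ≠ 0, star x ⬝ᵥ (M *ᵥ x) ≠ 0) : IsUnit M := by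
  refine mulVec_injective_iff_isUnit.1 ((injective_iff_map_eq_zero M.mulVecLin).2 fun x hx ↦ ?_)
  by_contra hx0
  exact h x hx0 (by rw [← mulVecLin_apply, hx, dotProduct_zero])

end QuadraticForm

section Blocks

variable {m n α : Type*} [Fintype m] [Fintype n]

lemma star_sumElim_dotProduct_sumElim [NonUnitalNonAssocSemiring α] [Star α]
    (u v : m → α) (x y : n → α) :
    star (Sum.elim u x) ⬝ᵥ Sum.elim v y = star u ⬝ᵥ v + star x ⬝ᵥ y := by
  rw [← sumElim_dotProduct_sumElim]
  congr 1
  ext (i | i) <;> rfl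

lemma star_dotProduct_fromBlocks_mulVec_sumElim_zero [CommSemiring α] [StarRing α]
    (A : Matrix m m α) (B : Matrix m n α) (C : Matrix n m α) (D : Matrix n n α) (u : m → α) :
    star (Sum.elim u 0) ⬝ᵥ (fromBlocks A B C D *ᵥ Sum.elim u 0) = star u ⬝ᵥ (A *ᵥ u) := by
  simp [fromBlocks_mulVec, star_sumElim_dotProduct_sumElim]

lemma fromBlocks_mulVec_schur [DecidableEq m] [CommRing α] {A : Matrix m m α} (hA : IsUnit A)
    (B : Matrix m n α) (C : Matrix n m α) (D : Matrix n n α) (x : n → α) :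
    fromBlocks A B C D *ᵥ Sum.elim (-(A⁻¹ *ᵥ (B *ᵥ x))) x =
      Sum.elim (0 : m → α) ((D - C * A⁻¹ * B) *ᵥ x) := by
  have hAA : A * A⁻¹ = 1 := mul_nonsing_inv A ((isUnit_iff_isUnit_det A).1 hA)
  simp only [fromBlocks_mulVec, Sum.elim_comp_inl, Sum.elim_comp_inr, mulVec_neg, mulVec_mulVec,
    ← Matrix.mul_assoc, hAA, Matrix.one_mul, neg_add_cancel, sub_mulVec, neg_add_eq_sub]

lemma star_dotProduct_fromBlocks_mulVec_schur [DecidableEq m] [CommRing α] [StarRing α]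
    {A : Matrix m m α} (hA : IsUnit A)
    (B : Matrix m n α) (C : Matrix n m α) (D : Matrix n n α) (x : n → α) :
    star (Sum.elim (-(A⁻¹ *ᵥ (B *ᵥ x))) x) ⬝ᵥ
        (fromBlocks A B C D *ᵥ Sum.elim (-(A⁻¹ *ᵥ (B *ᵥ x))) x) =
      star x ⬝ᵥ ((D - C * A⁻¹ * B) *ᵥ x) := by
  rw [fromBlocks_mulVec_schur hA, star_sumElim_dotProduct_sumElim, dotProduct_zero, zero_add]

end Blocks

end Matrix

theorem schur_complement_generalized_higham_general {p q : Type*}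
    [Fintype p] [DecidableEq p] [Fintype q]
    (A11 : Matrix p p ℂ) (A12 : Matrix p q ℂ) (A21 : Matrix q p ℂ) (A22 : Matrix q q ℂ)
    (B C : Matrix (p ⊕ q) (p ⊕ q) ℂ)
    (hB : B.PosDef) (hC : C.PosDef)
    (hA : Matrix.fromBlocks A11 A12 A21 A22 = B + Complex.I • C) :
    IsUnit A11 ∧
      ∃ R S : Matrix q q ℂ, R.PosDef ∧ S.PosDef ∧
        A22 - A21 * A11⁻¹ * A12 = R + Complex.I • S := by
  have hA_quad := (exists_posDef_add_I_smul_posDef_iff _).1 ⟨B, C, hB, hC, hA⟩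
  have hA11 : IsUnit A11 := isUnit_of_star_dotProduct_mulVec_ne_zero fun v hv hv0 ↦ by
    have := (hA_quad (Sum.elim v 0) (fun h ↦ hv (congrArg (· ∘ Sum.inl) h))).1
    rw [star_dotProduct_fromBlocks_mulVec_sumElim_zero, hv0, zero_re] at this
    exact this.false
  refine ⟨hA11, (exists_posDef_add_I_smul_posDef_iff _).2 fun x hx ↦ ?_⟩
  rw [← star_dotProduct_fromBlocks_mulVec_schur hA11]
  exact hA_quad _ (fun h ↦ hx (congrArg (· ∘ Sum.inr) h))

/-- For a generalized Higham matrix `A = B + iC` (with `B`, `C` Hermitian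
positive definite), partitioned into 2×2 blocks, the leading block `A₁₁` is
invertible and the Schur complement `A₂₂ - A₂₁ A₁₁⁻¹ A₁₂` is again a
generalized Higham matrix. -/
theorem schur_complement_generalized_higham {p q : Type*}
    [Fintype p] [DecidableEq p] [Fintype q] [DecidableEq q]
    (A11 : Matrix p p ℂ) (A12 : Matrix p q ℂ) (A21 : Matrix q p ℂ) (A22 : Matrix q q ℂ)
    (B C : Matrix (p ⊕ q) (p ⊕ q) ℂ)
    (hB : B.PosDef) (hC : C.PosDef)
    (hA : Matrix.fromBlocks A11 A12 A21 A22 = B + Complex.I • C) :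
    IsUnit A11 ∧
      ∃ R S : Matrix q q ℂ, R.PosDef ∧ S.PosDef ∧
        A22 - A21 * A11⁻¹ * A12 = R + Complex.I • S :=
  schur_complement_generalized_higham_general A11 A12 A21 A22 B C hB hC hA
end

section
/- Let B = [[B_k, b],[b*, b_jj]] be a (k+1)×(k+1) Hermitian positive definite matrix with condition number κ(B). Then b* B_k⁻¹ b ≤ ((1 − κ(B))/(1 + κ(B)))² · b_jj, and consequently the Schur complement scalar satisfies b_jj − b* B_k⁻¹ b ≥ (4κ(B)/(1 + κ(B))²) · b_jj. -/
open Matrix Complex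
open scoped ComplexOrder

/-- The spectral condition number of a Hermitian matrix: the ratio of its
largest to its smallest eigenvalue. -/
noncomputable def condNum {m : Type*} [Fintype m] [DecidableEq m]
    {M : Matrix m m ℂ} (hM : M.IsHermitian) : ℝ :=
  (⨆ i, hM.eigenvalues i) / (⨅ i, hM.eigenvalues i)

/-!
Let `σ = b_jj - b* B_k⁻¹ b` and let `m ≤ M` be the extreme eigenvalues of `B`. The vector
`v = (-B_k⁻¹ b, 1)` satisfies `B v = σ e_last`, so `σ = v* B v > 0`. Evaluating the operator
inequality `B (B - m) (B - M) ≤ 0` at `v` gives `σ b_jj + M m ≤ (M + m) σ`, which is Kantorovich's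
inequality `e* B e + M m e* B⁻¹ e ≤ M + m` at `e = e_last` (as `(B⁻¹)_jj = 1 / σ`). AM-GM turns it
into `σ ≥ 4 M m / (M + m)² · b_jj`, and the bound on `b* B_k⁻¹ b` is the same statement because
`1 - 4κ / (1 + κ)² = ((1 - κ) / (1 + κ))²`.
-/

namespace Matrix

theorem star_mulVec_dotProduct_star_mulVec {R n : Type*} [CommRing R] [StarRing R] [Fintype n]
    [DecidableEq n] {U : Matrix n n R} (hU : U * star U = 1) (x y : n → R) :
    star (star U *ᵥ x) ⬝ᵥ (star U *ᵥ y) = star x ⬝ᵥ y := by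
  rw [star_mulVec, ← dotProduct_mulVec, mulVec_mulVec, star_eq_conjTranspose,
    conjTranspose_conjTranspose, ← star_eq_conjTranspose, hU, one_mulVec]

namespace IsHermitian

variable {𝕜 n : Type*} [RCLike 𝕜] [Fintype n] [DecidableEq n] {A : Matrix n n 𝕜}

theorem star_eigenvectorUnitary_mulVec_mulVec (hA : A.IsHermitian) (z : n → 𝕜) :
    star (hA.eigenvectorUnitary : Matrix n n 𝕜) *ᵥ (A *ᵥ z) =
      diagonal (RCLike.ofReal ∘ hA.eigenvalues) *ᵥ
        (star (hA.eigenvectorUnitary : Matrix n n 𝕜) *ᵥ z) := by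
  have h : star (hA.eigenvectorUnitary : Matrix n n 𝕜) * A *
      (hA.eigenvectorUnitary : Matrix n n 𝕜) = diagonal (RCLike.ofReal ∘ hA.eigenvalues) := by
    simpa using hA.conjStarAlgAut_star_eigenvectorUnitary
  rw [← h, mulVec_mulVec, mulVec_mulVec, Matrix.mul_assoc,
    Unitary.mul_star_self_of_mem hA.eigenvectorUnitary.2, Matrix.mul_one]

theorem star_dotProduct_mulVec_eq_sum (hA : A.IsHermitian) (x y : n → 𝕜) :
    star x ⬝ᵥ A *ᵥ y = ∑ i, (hA.eigenvalues i : 𝕜) *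
      (star ((star (hA.eigenvectorUnitary : Matrix n n 𝕜) *ᵥ x) i) *
        (star (hA.eigenvectorUnitary : Matrix n n 𝕜) *ᵥ y) i) := by
  rw [← star_mulVec_dotProduct_star_mulVec (Unitary.coe_mul_star_self hA.eigenvectorUnitary),
    hA.star_eigenvectorUnitary_mulVec_mulVec]
  simp only [dotProduct, mulVec_diagonal, Pi.star_apply, Function.comp_apply]
  exact Finset.sum_congr rfl fun i _ => by ring

/-- The operator inequality `A (A - m) (A - M) ≤ 0`, evaluated at `z`. -/
theorem re_kantorovich (hA : A.IsHermitian) {m M : ℝ} (hm : 0 ≤ m)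
    (hmA : ∀ i, m ≤ hA.eigenvalues i) (hAM : ∀ i, hA.eigenvalues i ≤ M) (z : n → 𝕜) :
    RCLike.re (star (A *ᵥ z) ⬝ᵥ A *ᵥ (A *ᵥ z)) + M * m * RCLike.re (star z ⬝ᵥ A *ᵥ z) ≤
      (M + m) * RCLike.re (star (A *ᵥ z) ⬝ᵥ A *ᵥ z) := by
  simp only [hA.star_dotProduct_mulVec_eq_sum, hA.star_eigenvectorUnitary_mulVec_mulVec,
    mulVec_diagonal, Function.comp_apply, map_sum, Finset.mul_sum, ← Finset.sum_add_distrib]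
  refine Finset.sum_le_sum fun i _ => ?_
  set w := (star (hA.eigenvectorUnitary : Matrix n n 𝕜) *ᵥ z) i
  set l := hA.eigenvalues i
  have key : l * (l - m) * (l - M) * ‖w‖ ^ 2 ≤ 0 :=
    mul_nonpos_of_nonpos_of_nonneg
      (mul_nonpos_of_nonneg_of_nonpos (mul_nonneg (hm.trans (hmA i)) (sub_nonneg.2 (hmA i)))
        (sub_nonpos.2 (hAM i))) (sq_nonneg _)
  rw [RCLike.norm_sq_eq_def] at key
  simp only [star_mul', RCLike.star_def, RCLike.conj_ofReal, RCLike.mul_re, RCLike.mul_im,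
    RCLike.conj_re, RCLike.conj_im, RCLike.ofReal_re, RCLike.ofReal_im]
  linear_combination key

end IsHermitian

theorem mulVec_snoc_neg_one {R : Type*} [CommRing R] {k : ℕ}
    (B : Matrix (Fin (k + 1)) (Fin (k + 1)) R) (u : Fin k → R)
    (hu : B.submatrix Fin.castSucc Fin.castSucc *ᵥ u = fun i => B i.castSucc (Fin.last k)) :
    B *ᵥ Fin.snoc (-u) 1 = Pi.single (Fin.last k)
      (B (Fin.last k) (Fin.last k) - (fun j => B (Fin.last k) j.castSucc) ⬝ᵥ u) := by
  ext i
  induction i using Fin.lastCases with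
  | last => simp [mulVec, dotProduct, Fin.sum_univ_castSucc, sub_eq_neg_add]
  | cast i =>
    have hi := congrFun hu i
    simp only [mulVec, dotProduct, submatrix_apply] at hi
    simp [mulVec, dotProduct, Fin.sum_univ_castSucc, hi]

end Matrix

theorem one_sub_div_one_add_sq {κ : ℝ} (hκ : 1 + κ ≠ 0) :
    ((1 - κ) / (1 + κ)) ^ 2 = 1 - 4 * κ / (1 + κ) ^ 2 := by
  field_simp
  ring

theorem four_mul_div_sq_mul_le_of_sq_mul_add_le {r a m M : ℝ} (hr : 0 < r) (hm : 0 < m)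
    (hmM : m ≤ M) (h : r ^ 2 * a + M * m * r ≤ (M + m) * r ^ 2) :
    4 * M * m / (M + m) ^ 2 * a ≤ r := by
  have hc : r * a + M * m ≤ (M + m) * r := by nlinarith
  have hMm : 0 < M * m := mul_pos (hm.trans_le hmM) hm
  -- `(M + m)² r - 4 M m a = r (M + m - 2a)² + 4a ((M + m) r - r a - M m)`
  rw [div_mul_eq_mul_div, div_le_iff₀ (by nlinarith)]
  rcases le_total 0 a with ha | ha
  · nlinarith [mul_nonneg hr.le (sq_nonneg (M + m - 2 * a)), mul_nonneg ha (sub_nonneg.2 hc)]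
  · nlinarith [mul_nonneg hr.le (sq_nonneg (M + m))]

namespace Matrix.PosDef

variable {𝕜 : Type*} [RCLike 𝕜] {k : ℕ} {B : Matrix (Fin (k + 1)) (Fin (k + 1)) 𝕜}

theorem kantorovich_le_re_schur_last (hB : B.PosDef) {m M : ℝ} (hm : 0 < m)
    (hmB : ∀ i, m ≤ hB.isHermitian.eigenvalues i) (hBM : ∀ i, hB.isHermitian.eigenvalues i ≤ M) :
    4 * M * m / (M + m) ^ 2 * RCLike.re (B (Fin.last k) (Fin.last k)) ≤
      RCLike.re (B (Fin.last k) (Fin.last k) - star (fun i => B i.castSucc (Fin.last k)) ⬝ᵥ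
        (B.submatrix Fin.castSucc Fin.castSucc)⁻¹ *ᵥ fun i => B i.castSucc (Fin.last k)) := by
  set Bk := B.submatrix Fin.castSucc Fin.castSucc
  set b : Fin k → 𝕜 := fun i => B i.castSucc (Fin.last k)
  set u := Bk⁻¹ *ᵥ b
  set σ := B (Fin.last k) (Fin.last k) - star b ⬝ᵥ u
  have hBk : Bk.PosDef := hB.submatrix (Fin.castSucc_injective k)
  have hu : Bk *ᵥ u = b := by
    rw [mulVec_mulVec, mul_nonsing_inv _ ((isUnit_iff_isUnit_det _).mp hBk.isUnit), one_mulVec]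
  have hrow : (fun j => B (Fin.last k) j.castSucc) = star b :=
    funext fun j => (hB.isHermitian.apply _ _).symm
  set v : Fin (k + 1) → 𝕜 := Fin.snoc (-u) 1
  have hBv : B *ᵥ v = Pi.single (Fin.last k) σ := by
    rw [mulVec_snoc_neg_one B u hu, hrow]
  have hσ : 0 < σ := by
    have hv : v ≠ 0 := fun h => one_ne_zero (α := 𝕜) (by simpa [v] using congrFun h (Fin.last k))
    simpa [hBv, v] using hB.dotProduct_mulVec_pos hv
  obtain ⟨r, hr, hrσ⟩ := RCLike.pos_iff_exists_ofReal.mp hσ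
  have hkant := hB.isHermitian.re_kantorovich hm.le hmB hBM v
  rw [hBv, ← hrσ] at hkant
  simp only [Pi.star_single, RCLike.star_def, RCLike.conj_ofReal, mulVec_single, op_smul_eq_smul,
    algebraMap_smul, dotProduct_smul, single_dotProduct, col_apply, RCLike.smul_re, RCLike.mul_re,
    RCLike.ofReal_re, RCLike.ofReal_im, zero_mul, sub_zero, dotProduct_single, Pi.star_apply,
    Fin.snoc_last, star_one, one_mul, Pi.single_eq_same, mul_zero, v] at hkant
  rw [← hrσ, RCLike.ofReal_re]
  exact four_mul_div_sq_mul_le_of_sq_mul_add_le hr hm ((hmB 0).trans (hBM 0))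
    (by linear_combination hkant)

end Matrix.PosDef

/-- For a `(k+1) × (k+1)` Hermitian positive definite matrix
`B = [[B_k, b], [b*, b_jj]]` with condition number `κ(B)`, one has
`b* B_k⁻¹ b ≤ ((1-κ(B))/(1+κ(B)))² b_jj` and hence
`b_jj - b* B_k⁻¹ b ≥ (4κ(B)/(1+κ(B))²) b_jj`. -/
theorem corner_schur_scalar_bounds {k : ℕ}
    (B : Matrix (Fin (k + 1)) (Fin (k + 1)) ℂ) (hB : B.PosDef)
    (Bk : Matrix (Fin k) (Fin k) ℂ) (b : Fin k → ℂ) (bjj : ℂ)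
    (hBk : Bk = B.submatrix Fin.castSucc Fin.castSucc)
    (hb : b = fun i => B i.castSucc (Fin.last k))
    (hbjj : bjj = B (Fin.last k) (Fin.last k)) :
    (star b ⬝ᵥ Bk⁻¹.mulVec b).re ≤
        ((1 - condNum hB.isHermitian) / (1 + condNum hB.isHermitian)) ^ 2 * bjj.re ∧
      4 * condNum hB.isHermitian / (1 + condNum hB.isHermitian) ^ 2 * bjj.re ≤
        (bjj - star b ⬝ᵥ Bk⁻¹.mulVec b).re := by
  subst hBk hb hbjj
  set m := ⨅ i, hB.isHermitian.eigenvalues i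
  set M := ⨆ i, hB.isHermitian.eigenvalues i
  have hm : 0 < m := by
    obtain ⟨i, hi⟩ := exists_eq_ciInf_of_finite (f := hB.isHermitian.eigenvalues)
    exact (hB.eigenvalues_pos i).trans_eq hi
  have hmB : ∀ i, m ≤ hB.isHermitian.eigenvalues i := ciInf_le (Set.finite_range _).bddBelow
  have hBM : ∀ i, hB.isHermitian.eigenvalues i ≤ M := le_ciSup (Set.finite_range _).bddAbove
  have hκ_pos : 0 < condNum hB.isHermitian := div_pos (hm.trans_le ((hmB 0).trans (hBM 0))) hm
  have hκ : 4 * condNum hB.isHermitian / (1 + condNum hB.isHermitian) ^ 2 =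
      4 * M * m / (M + m) ^ 2 := by
    rw [show condNum hB.isHermitian = M / m from rfl]
    field_simp
    ring
  have key := hB.kantorovich_le_re_schur_last hm hmB hBM
  simp only [RCLike.re_to_complex] at key
  rw [← hκ] at key
  refine ⟨?_, key⟩
  rw [sub_re] at key
  rw [one_sub_div_one_add_sq (by positivity)]
  linarith
end

section
/- For a Hermitian positive definite matrix B partitioned as [[B_k, b],[b*, b_jj]] with condition number κ, one has |b* B_k⁻¹ b| ≤ ((κ − 1)/(κ + 1))² b_jj, and hence |b_jj − b* B_k⁻¹ b| ≤ (2(1 + κ²)/(1 + κ)²) b_jj. -/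
/-!
Write `s = b* B_k⁻¹ b`, `c = b_jj` and let `α ≤ β` be the extreme eigenvalues of `B`, so that
`α ‖x‖² ≤ x* B x ≤ β ‖x‖²`. With `v = B_k⁻¹ b`, the vectors `x_t = (t v, 1)`, `t : ℝ`, satisfy
`x_t* B x_t = (t² + 2t) s + c` and `‖x_t‖² = t² ‖v‖² + 1`. The two Rayleigh bounds therefore
say that two real quadratics in `t` are nonnegative, and their discriminants give
`s² ≤ (s - α ‖v‖²)(c - α)` and `s² ≤ (β ‖v‖² - s)(β - c)`. Eliminating `‖v‖²` leaves the
Kantorovich-type inequality `αβ ≤ (c - s)(α + β - c)`, and optimising over `c` gives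
`s (α + β)² ≤ (β - α)² c`, which is the first bound with `κ = β / α`. The second follows from
`0 ≤ s ≤ c` and `(1 + κ)² ≤ 2 (1 + κ²)`.
-/

open Matrix Complex
open scoped ComplexOrder

open scoped MatrixOrder

theorem sq_le_mul_of_forall_quadratic_nonneg {a b c : ℝ}
    (h : ∀ t : ℝ, 0 ≤ a * t ^ 2 + 2 * b * t + c) : b ^ 2 ≤ a * c := by
  have := discrim_le_zero fun t => (h t).trans_eq (by ring : _ = a * (t * t) + 2 * b * t + c)
  rw [discrim] at this
  linarith

theorem mul_le_sub_mul_add_sub_of_sq_le {α β c s w : ℝ} (hα : 0 < α) (hαc : α ≤ c) (hcβ : c ≤ β)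
    (hs : 0 ≤ s) (hlo : s ^ 2 ≤ (s - α * w) * (c - α)) (hhi : s ^ 2 ≤ (β * w - s) * (β - c)) :
    α * β ≤ (c - s) * (α + β - c) := by
  -- `β (β - c) hlo + α (c - α) hhi` eliminates `w`
  have key : 0 ≤ s * (β - α) * ((β - c) * (c - α) - s * (α + β - c)) := by
    nlinarith [mul_nonneg (mul_nonneg hα.le (sub_nonneg.2 hαc)) (sub_nonneg.2 hhi),
      mul_nonneg (mul_nonneg (hα.le.trans (hαc.trans hcβ)) (sub_nonneg.2 hcβ)) (sub_nonneg.2 hlo)]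
  rcases hs.eq_or_lt with rfl | hs
  · nlinarith
  rcases (hαc.trans hcβ).eq_or_lt with rfl | hαβ
  · obtain rfl := le_antisymm hcβ hαc
    nlinarith
  nlinarith [nonneg_of_mul_nonneg_right key (mul_pos hs (sub_pos.2 hαβ))]

theorem mul_add_sq_le_sub_sq_mul_of_mul_le {α β c s : ℝ} (hα : 0 < α) (hαc : α ≤ c) (hcβ : c ≤ β)
    (h : α * β ≤ (c - s) * (α + β - c)) :
    s * (α + β) ^ 2 ≤ (β - α) ^ 2 * c := by
  have hcs : 0 ≤ c - s := by
    by_contra! hcs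
    nlinarith [mul_pos hα (hα.trans_le (hαc.trans hcβ))]
  -- `(β - α)² c - s (α + β)² = (α + β)² (c - s) - 4αβc ≥ (c - s) (α + β - 2c)²`
  nlinarith [mul_nonneg hcs (sq_nonneg (α + β - 2 * c)), mul_nonneg (hα.le.trans hαc) hcs]

theorem le_sub_one_div_add_one_sq_mul_of_mul_sq_le {α β s c : ℝ} (hα : 0 < α) (hαβ : α ≤ β)
    (h : s * (α + β) ^ 2 ≤ (β - α) ^ 2 * c) : s ≤ ((β / α - 1) / (β / α + 1)) ^ 2 * c := by
  rw [div_sub_one hα.ne', div_add_one hα.ne', div_div_div_cancel_right₀ hα.ne', div_pow,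
    div_mul_eq_mul_div, le_div_iff₀ (by nlinarith), add_comm β]
  exact h

theorem one_le_two_mul_one_add_sq_div_one_add_sq {κ : ℝ} (hκ : 0 ≤ κ) :
    1 ≤ 2 * (1 + κ ^ 2) / (1 + κ) ^ 2 := by
  rw [le_div_iff₀ (by positivity)]
  nlinarith [sq_nonneg (κ - 1)]

theorem Fin.star_snoc {α : Type*} [Star α] {k : ℕ} (u : Fin k → α) (z : α) :
    star (Fin.snoc u z : Fin (k + 1) → α) = Fin.snoc (star u) (star z) := by
  funext i
  refine Fin.lastCases ?_ (fun j => ?_) i <;> simp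

namespace Matrix

section Snoc

variable {R : Type*} [CommSemiring R] {k : ℕ}

theorem snoc_dotProduct_snoc (u u' : Fin k → R) (z z' : R) :
    (Fin.snoc u z : Fin (k + 1) → R) ⬝ᵥ Fin.snoc u' z' = u ⬝ᵥ u' + z * z' := by
  simp [dotProduct, Fin.sum_univ_castSucc]

theorem snoc_dotProduct_mulVec_snoc (B : Matrix (Fin (k + 1)) (Fin (k + 1)) R)
    (u u' : Fin k → R) (z z' : R) :
    (Fin.snoc u z : Fin (k + 1) → R) ⬝ᵥ B *ᵥ Fin.snoc u' z' =
      u ⬝ᵥ B.submatrix Fin.castSucc Fin.castSucc *ᵥ u'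
        + (u ⬝ᵥ fun i => B i.castSucc (Fin.last k)) * z'
        + z * ((fun j => B (Fin.last k) j.castSucc) ⬝ᵥ u')
        + z * B (Fin.last k) (Fin.last k) * z' := by
  simp only [dotProduct, mulVec, Fin.sum_univ_castSucc, Fin.snoc_castSucc, Fin.snoc_last,
    submatrix_apply, Finset.mul_sum, Finset.sum_mul, mul_add, Finset.sum_add_distrib]
  simp only [mul_comm, mul_left_comm]
  ring

end Snoc

namespace IsHermitian

variable {𝕜 n : Type*} [RCLike 𝕜] [Fintype n] [DecidableEq n] {A : Matrix n n 𝕜}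

theorem iInf_eigenvalues_mul_le_re_dotProduct_mulVec (hA : A.IsHermitian) (x : n → 𝕜) :
    (⨅ i, hA.eigenvalues i) * RCLike.re (star x ⬝ᵥ x) ≤ RCLike.re (star x ⬝ᵥ A *ᵥ x) := by
  have h : algebraMap ℝ _ (⨅ i, hA.eigenvalues i) ≤ A := by
    rw [algebraMap_le_iff_le_spectrum hA.isSelfAdjoint, hA.spectrum_real_eq_range_eigenvalues]
    rintro _ ⟨i, rfl⟩
    exact ciInf_le (Set.finite_range _).bddBelow i
  simpa [sub_mulVec, Algebra.algebraMap_eq_smul_one, smul_mulVec, dotProduct_sub, RCLike.smul_re]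
    using (RCLike.nonneg_iff.mp ((le_iff.mp h).dotProduct_mulVec_nonneg x)).1

theorem re_dotProduct_mulVec_le_iSup_eigenvalues_mul (hA : A.IsHermitian) (x : n → 𝕜) :
    RCLike.re (star x ⬝ᵥ A *ᵥ x) ≤ (⨆ i, hA.eigenvalues i) * RCLike.re (star x ⬝ᵥ x) := by
  have h : A ≤ algebraMap ℝ _ (⨆ i, hA.eigenvalues i) := by
    rw [le_algebraMap_iff_spectrum_le hA.isSelfAdjoint, hA.spectrum_real_eq_range_eigenvalues]
    rintro _ ⟨i, rfl⟩
    exact le_ciSup (Set.finite_range _).bddAbove i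
  simpa [sub_mulVec, Algebra.algebraMap_eq_smul_one, smul_mulVec, dotProduct_sub, RCLike.smul_re]
    using (RCLike.nonneg_iff.mp ((le_iff.mp h).dotProduct_mulVec_nonneg x)).1

end IsHermitian

namespace PosDef

variable {𝕜 : Type*} [RCLike 𝕜] {k : ℕ} {B : Matrix (Fin (k + 1)) (Fin (k + 1)) 𝕜}
  {Bk : Matrix (Fin k) (Fin k) 𝕜} {b : Fin k → 𝕜}

theorem star_snoc_dotProduct_mulVec_snoc (hB : B.PosDef)
    (hBk : Bk = B.submatrix Fin.castSucc Fin.castSucc)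
    (hb : b = fun i => B i.castSucc (Fin.last k)) (t : ℝ) :
    star (Fin.snoc ((t : 𝕜) • Bk⁻¹ *ᵥ b) 1 : Fin (k + 1) → 𝕜) ⬝ᵥ
        B *ᵥ Fin.snoc ((t : 𝕜) • Bk⁻¹ *ᵥ b) 1 =
      (t ^ 2 + 2 * t) * (star b ⬝ᵥ Bk⁻¹ *ᵥ b) + B (Fin.last k) (Fin.last k) := by
  have hBk' : Bk.PosDef := hBk ▸ hB.submatrix (Fin.castSucc_injective k)
  have hBv : Bk *ᵥ Bk⁻¹ *ᵥ b = b := by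
    rw [mulVec_mulVec, mul_nonsing_inv _ ((isUnit_iff_isUnit_det _).mp hBk'.isUnit), one_mulVec]
  have hrow : (fun j => B (Fin.last k) j.castSucc) = star b := by
    funext j
    rw [hb]
    exact (hB.isHermitian.apply _ _).symm
  have hsymm : star (Bk⁻¹ *ᵥ b) ⬝ᵥ b = star b ⬝ᵥ Bk⁻¹ *ᵥ b := by
    rw [star_dotProduct]
    exact (IsSelfAdjoint.of_nonneg (hBk'.inv.posSemidef.dotProduct_mulVec_nonneg b)).star_eq
  simp only [Fin.star_snoc, snoc_dotProduct_mulVec_snoc, ← hBk, ← hb, hrow, star_smul, star_one,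
    RCLike.star_def, RCLike.conj_ofReal, mulVec_smul, dotProduct_smul, smul_dotProduct, hBv, hsymm,
    smul_eq_mul]
  ring

theorem re_star_dotProduct_inv_mulVec_mul_sq_le (hB : B.PosDef)
    (hBk : Bk = B.submatrix Fin.castSucc Fin.castSucc)
    (hb : b = fun i => B i.castSucc (Fin.last k)) {α β : ℝ} (hα : 0 < α)
    (hlo : ∀ x, α * RCLike.re (star x ⬝ᵥ x) ≤ RCLike.re (star x ⬝ᵥ B *ᵥ x))
    (hhi : ∀ x, RCLike.re (star x ⬝ᵥ B *ᵥ x) ≤ β * RCLike.re (star x ⬝ᵥ x)) :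
    RCLike.re (star b ⬝ᵥ Bk⁻¹ *ᵥ b) * (α + β) ^ 2 ≤
      (β - α) ^ 2 * RCLike.re (B (Fin.last k) (Fin.last k)) := by
  have hBk' : Bk.PosDef := hBk ▸ hB.submatrix (Fin.castSucc_injective k)
  obtain ⟨s, hs0, hs⟩ :=
    RCLike.nonneg_iff_exists_ofReal.mp (hBk'.inv.posSemidef.dotProduct_mulVec_nonneg b)
  obtain ⟨w, -, hw⟩ := RCLike.nonneg_iff_exists_ofReal.mp (dotProduct_star_self_nonneg (Bk⁻¹ *ᵥ b))
  obtain ⟨c, -, hc⟩ := RCLike.pos_iff_exists_ofReal.mp (hB.diag_pos (i := Fin.last k))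
  let x (t : ℝ) : Fin (k + 1) → 𝕜 := Fin.snoc ((t : 𝕜) • Bk⁻¹ *ᵥ b) 1
  have hform (t : ℝ) : RCLike.re (star (x t) ⬝ᵥ B *ᵥ x t) = (t ^ 2 + 2 * t) * s + c := by
    rw [hB.star_snoc_dotProduct_mulVec_snoc hBk hb, ← hs, ← hc]
    norm_cast
  have hnorm (t : ℝ) : RCLike.re (star (x t) ⬝ᵥ x t) = t ^ 2 * w + 1 := by
    simp only [x, Fin.star_snoc, snoc_dotProduct_snoc, star_smul, RCLike.star_def,
      RCLike.conj_ofReal, star_one, dotProduct_smul, smul_dotProduct, ← hw, smul_eq_mul, mul_one]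
    norm_cast
    ring
  have hαc : α ≤ c := by simpa [hform, hnorm] using hlo (x 0)
  have hcβ : c ≤ β := by simpa [hform, hnorm] using hhi (x 0)
  have h1 : s ^ 2 ≤ (s - α * w) * (c - α) := sq_le_mul_of_forall_quadratic_nonneg fun t => by
    have := hlo (x t); rw [hform, hnorm] at this; linarith
  have h2 : (-s) ^ 2 ≤ (β * w - s) * (β - c) := sq_le_mul_of_forall_quadratic_nonneg fun t => by
    have := hhi (x t); rw [hform, hnorm] at this; linarith
  rw [← hs, ← hc, RCLike.ofReal_re, RCLike.ofReal_re]
  exact mul_add_sq_le_sub_sq_mul_of_mul_le hα hαc hcβ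
    (mul_le_sub_mul_add_sub_of_sq_le hα hαc hcβ hs0 h1 (by simpa using h2))

end PosDef

end Matrix

/-- For a `(k+1) × (k+1)` Hermitian positive definite matrix
`B = [[B_k, b], [b*, b_jj]]` with condition number `κ`, one has
`|b* B_k⁻¹ b| ≤ ((κ-1)/(κ+1))² b_jj` and hence
`|b_jj - b* B_k⁻¹ b| ≤ (2(1+κ²)/(1+κ)²) b_jj`. -/
theorem corner_schur_scalar_abs_bounds {k : ℕ}
    (B : Matrix (Fin (k + 1)) (Fin (k + 1)) ℂ) (hB : B.PosDef)
    (Bk : Matrix (Fin k) (Fin k) ℂ) (b : Fin k → ℂ) (bjj : ℂ)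
    (hBk : Bk = B.submatrix Fin.castSucc Fin.castSucc)
    (hb : b = fun i => B i.castSucc (Fin.last k))
    (hbjj : bjj = B (Fin.last k) (Fin.last k))
    (κ : ℝ) (hκ : κ = condNum hB.isHermitian) :
    ‖star b ⬝ᵥ Bk⁻¹.mulVec b‖ ≤ ((κ - 1) / (κ + 1)) ^ 2 * bjj.re ∧
      ‖bjj - star b ⬝ᵥ Bk⁻¹.mulVec b‖ ≤
        2 * (1 + κ ^ 2) / (1 + κ) ^ 2 * bjj.re := by
  set α := ⨅ i, hB.isHermitian.eigenvalues i
  set β := ⨆ i, hB.isHermitian.eigenvalues i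
  have hα : 0 < α := by
    obtain ⟨i, hi⟩ := exists_eq_ciInf_of_finite (f := hB.isHermitian.eigenvalues)
    exact (hB.eigenvalues_pos i).trans_eq hi
  have hαβ : α ≤ β := ciInf_le_ciSup (Set.finite_range _).bddBelow (Set.finite_range _).bddAbove
  have key : RCLike.re (star b ⬝ᵥ Bk⁻¹ *ᵥ b) * (α + β) ^ 2 ≤
      (β - α) ^ 2 * RCLike.re (B (Fin.last k) (Fin.last k)) :=
    hB.re_star_dotProduct_inv_mulVec_mul_sq_le hBk hb hα
      hB.isHermitian.iInf_eigenvalues_mul_le_re_dotProduct_mulVec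
      hB.isHermitian.re_dotProduct_mulVec_le_iSup_eigenvalues_mul
  obtain ⟨s, hs0, hs⟩ := RCLike.nonneg_iff_exists_ofReal.mp
    ((hBk ▸ hB.submatrix (Fin.castSucc_injective k)).inv.posSemidef.dotProduct_mulVec_nonneg b)
  obtain ⟨c, hc0, hc⟩ := RCLike.pos_iff_exists_ofReal.mp (hB.diag_pos (i := Fin.last k))
  rw [← hs, ← hc, RCLike.ofReal_re, RCLike.ofReal_re] at key
  have hκβα : κ = β / α := hκ
  have hsc : s ≤ c := by nlinarith [mul_pos (mul_pos hα (hα.trans_le hαβ)) hc0]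
  have hre : bjj.re = c := by rw [hbjj, ← hc]; exact RCLike.ofReal_re (K := ℂ) c
  rw [hre, ← hs, hbjj, ← hc, ← RCLike.ofReal_sub, RCLike.norm_ofReal, RCLike.norm_ofReal,
    abs_of_nonneg hs0, abs_of_nonneg (sub_nonneg.2 hsc), hκβα]
  have hfac := one_le_two_mul_one_add_sq_div_one_add_sq (div_nonneg (hα.le.trans hαβ) hα.le)
  refine ⟨le_sub_one_div_add_one_sq_mul_of_mul_sq_le hα hαβ key, ?_⟩
  calc c - s ≤ 1 * c := by linarith
    _ ≤ _ := by gcongr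
end

section
/- Let A = B + iC be a generalized Higham matrix with Gaussian elimination performed without pivoting, and let a_{jj}^{(k)} = a_{jj} − βᵀ A_k⁻¹ α denote the (j,j) entry after k steps of elimination (where A_k is the leading k×k principal submatrix, α and β the relevant column/row segments). Then |a_{jj}^{(k)}| ≥ (4κ/(1+κ)²)|a_{jj}|, where κ = max{κ(B), κ(C)} and κ denotes the spectral condition number. -/
open Matrix Complex
open scoped ComplexOrder

/-!
Let `M` be the principal submatrix of `A` on the indices `0, …, k - 1, j`. By the Schur complement
formula `a_jj^{(k)} = 1 / (M⁻¹)_jj`, so it suffices to show `|m_jj| |(M⁻¹)_jj| ≤ (1 + κ)² / (4κ)`.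
Write `m_jj = u + iv` with `u = b_jj > 0`, `v = c_jj > 0` and `c + is = m_jj / |m_jj|`. Then
`M = (c + is) (H + iS)` with `H = cB + sC` positive definite, `S = cC - sB` Hermitian and
`H_jj = |m_jj|`. Adding a skew-Hermitian part only shrinks quadratic forms of the inverse,
`|xᴴ (H + iS)⁻¹ x| ≤ xᴴ H⁻¹ x`, and the spectrum of `H` lies in `[μ, κμ]` with
`μ = c μ_B + s μ_C`, so Kantorovich's inequality `(xᴴ H x) (xᴴ H⁻¹ x) ≤ (1 + κ)² / (4κ)` for
unit `x` concludes.
-/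

open scoped MatrixOrder

namespace Matrix

variable {m : Type*}

section

variable [Fintype m]

theorem IsHermitian.star_mulVec_dotProduct {H : Matrix m m ℂ} (hH : H.IsHermitian)
    (u v : m → ℂ) : star (H *ᵥ u) ⬝ᵥ v = star u ⬝ᵥ H *ᵥ v := by
  rw [star_mulVec, hH.eq, dotProduct_mulVec]

theorem IsHermitian.coe_re_dotProduct_mulVec {M : Matrix m m ℂ} (hM : M.IsHermitian)
    (x : m → ℂ) : ((star x ⬝ᵥ M *ᵥ x).re : ℂ) = star x ⬝ᵥ M *ᵥ x :=
  Complex.ext rfl (by simpa using (hM.im_star_dotProduct_mulVec_self x).symm)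

theorem IsHermitian.re_dotProduct_mulVec_add_I_smul {H : Matrix m m ℂ} (hH : H.IsHermitian)
    (u v : m → ℂ) :
    (star (u + I • v) ⬝ᵥ H *ᵥ (u + I • v)).re =
      (star u ⬝ᵥ H *ᵥ u).re + (star v ⬝ᵥ H *ᵥ v).re - 2 * (star u ⬝ᵥ H *ᵥ v).im := by
  have h : star v ⬝ᵥ H *ᵥ u = star (star u ⬝ᵥ H *ᵥ v) := by
    rw [← hH.star_mulVec_dotProduct, star_dotProduct]
  simp only [star_add, star_smul, RCLike.star_def, conj_I, neg_smul, mulVec_add, mulVec_smul,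
    dotProduct_add, add_dotProduct, neg_dotProduct, smul_dotProduct, h, smul_eq_mul,
    dotProduct_smul, add_re, neg_re, mul_re, I_re, conj_re, zero_mul, I_im, conj_im, mul_neg,
    one_mul, sub_neg_eq_add, zero_add, zero_sub, neg_neg, add_im, neg_im, mul_im, neg_add_rev]
  ring

theorem PosSemidef.norm_sq_dotProduct_mulVec_le {M : Matrix m m ℂ} (hM : M.PosSemidef)
    (a b : m → ℂ) :
    ‖star a ⬝ᵥ M *ᵥ b‖ ^ 2 ≤ (star a ⬝ᵥ M *ᵥ a).re * (star b ⬝ᵥ M *ᵥ b).re := by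
  let _ := M.toSeminormedAddCommGroup hM
  let _ := M.toInnerProductSpace hM
  have hinner (u v : m → ℂ) : inner ℂ u v = star u ⬝ᵥ M *ᵥ v := dotProduct_comm _ _
  have h := inner_mul_inner_self_le (𝕜 := ℂ) a b
  rw [norm_inner_symm b a, ← sq, hinner, hinner, hinner] at h
  exact h

theorem re_dotProduct_mulVec_le_of_le {A B : Matrix m m ℂ} (h : A ≤ B) (x : m → ℂ) :
    (star x ⬝ᵥ A *ᵥ x).re ≤ (star x ⬝ᵥ B *ᵥ x).re := by
  have := (le_iff.mp h).re_dotProduct_nonneg x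
  simp only [RCLike.re_to_complex, sub_mulVec, dotProduct_sub, sub_re] at this
  linarith

theorem exists_norm_dotProduct_add_I_smul_mulVec_eq {B C : Matrix m m ℂ} (hB : B.PosDef)
    (hC : C.PosDef) {x : m → ℂ} (hx : x ≠ 0) : ∃ c s : ℝ, 0 < c ∧ 0 < s ∧ c ^ 2 + s ^ 2 = 1 ∧
      ‖star x ⬝ᵥ (B + I • C) *ᵥ x‖ = (star x ⬝ᵥ (c • B + s • C) *ᵥ x).re := by
  set u := (star x ⬝ᵥ B *ᵥ x).re
  set v := (star x ⬝ᵥ C *ᵥ x).re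
  have hu : 0 < u := hB.re_dotProduct_pos hx
  have hv : 0 < v := hC.re_dotProduct_pos hx
  have hw : star x ⬝ᵥ (B + I • C) *ᵥ x = u + v * I := by
    rw [add_mulVec, dotProduct_add, smul_mulVec, dotProduct_smul, smul_eq_mul,
      hB.isHermitian.coe_re_dotProduct_mulVec, hC.isHermitian.coe_re_dotProduct_mulVec, mul_comm]
  set r := √(u ^ 2 + v ^ 2)
  have hr : 0 < r := by positivity
  have hr2 : r ^ 2 = u ^ 2 + v ^ 2 := Real.sq_sqrt (by positivity)
  refine ⟨u / r, v / r, by positivity, by positivity, ?_, ?_⟩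
  · rw [div_pow, div_pow, ← add_div, ← hr2, div_self (by positivity)]
  · rw [hw, norm_add_mul_I]
    simp only [add_mulVec, smul_mulVec, dotProduct_add, dotProduct_smul, add_re, smul_re,
      smul_eq_mul]
    field_simp
    linear_combination hr2

end

theorem add_I_smul_eq_smul_add_I_smul (B C : Matrix m m ℂ) {c s : ℝ}
    (hcs : c ^ 2 + s ^ 2 = 1) :
    B + I • C = ((c : ℂ) + s * I) • ((c • B + s • C) + I • (c • C - s • B)) := by
  have hcs' : (c : ℂ) ^ 2 + (s : ℂ) ^ 2 = 1 := by exact_mod_cast hcs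
  ext i j
  simp only [add_apply, smul_apply, sub_apply, smul_eq_mul, Complex.real_smul]
  linear_combination (-(B i j) - I * C i j) * hcs' + (s ^ 2 * B i j - s * c * C i j) * I_sq

section

variable [DecidableEq m]

theorem posDef_of_smul_one_le {H : Matrix m m ℂ} {μ : ℝ} (hμ : 0 < μ)
    (h : μ • (1 : Matrix m m ℂ) ≤ H) : H.PosDef := by
  simpa using (PosDef.one.smul hμ).add_posSemidef h

theorem smul_one_submatrix {n : Type*} [DecidableEq n] (r : ℝ) {e : m → n}
    (he : Function.Injective e) : (r • (1 : Matrix n n ℂ)).submatrix e e = r • 1 := by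
  ext i j
  simp [one_apply, he.eq_iff]

theorem smul_one_le_submatrix {n : Type*} [DecidableEq n] {A : Matrix n n ℂ} {r : ℝ}
    (h : r • (1 : Matrix n n ℂ) ≤ A) {e : m → n} (he : Function.Injective e) :
    r • (1 : Matrix m m ℂ) ≤ A.submatrix e e :=
  smul_one_submatrix r he ▸ (le_iff.mp h).submatrix e

theorem submatrix_le_smul_one {n : Type*} [DecidableEq n] {A : Matrix n n ℂ} {r : ℝ}
    (h : A ≤ r • (1 : Matrix n n ℂ)) {e : m → n} (he : Function.Injective e) :
    A.submatrix e e ≤ r • (1 : Matrix m m ℂ) :=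
  smul_one_submatrix r he ▸ (le_iff.mp h).submatrix e

variable [Fintype m]

theorem mulVec_inv_mulVec {A : Matrix m m ℂ} (hA : IsUnit A.det) (v : m → ℂ) :
    A *ᵥ A⁻¹ *ᵥ v = v := by
  rw [mulVec_mulVec, mul_nonsing_inv _ hA, one_mulVec]

theorem inv_mulVec_mulVec {A : Matrix m m ℂ} (hA : IsUnit A.det) (v : m → ℂ) :
    A⁻¹ *ᵥ A *ᵥ v = v := by
  rw [mulVec_mulVec, nonsing_inv_mul _ hA, one_mulVec]

theorem star_single_one_dotProduct_mulVec_single_one (M : Matrix m m ℂ) (l : m) :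
    star (Pi.single l 1 : m → ℂ) ⬝ᵥ M *ᵥ Pi.single l 1 = M l l := by
  simp

theorem IsHermitian.iInf_eigenvalues_smul_one_le {M : Matrix m m ℂ} (hM : M.IsHermitian) :
    (⨅ i, hM.eigenvalues i) • (1 : Matrix m m ℂ) ≤ M := by
  rw [← Algebra.algebraMap_eq_smul_one]
  refine algebraMap_le_of_le_spectrum (fun t ht => ?_) hM.isSelfAdjoint
  obtain ⟨i, rfl⟩ := hM.spectrum_real_eq_range_eigenvalues ▸ ht
  exact ciInf_le (Finite.bddBelow_range _) i

theorem IsHermitian.le_iSup_eigenvalues_smul_one {M : Matrix m m ℂ} (hM : M.IsHermitian) :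
    M ≤ (⨆ i, hM.eigenvalues i) • (1 : Matrix m m ℂ) := by
  rw [← Algebra.algebraMap_eq_smul_one]
  refine le_algebraMap_of_spectrum_le (fun t ht => ?_) hM.isSelfAdjoint
  obtain ⟨i, rfl⟩ := hM.spectrum_real_eq_range_eigenvalues ▸ ht
  exact le_ciSup (Finite.bddAbove_range _) i

theorem PosDef.iInf_eigenvalues_pos_s16 [Nonempty m] {M : Matrix m m ℂ} (hM : M.PosDef) :
    0 < ⨅ i, hM.isHermitian.eigenvalues i := by
  obtain ⟨i, hi⟩ := exists_eq_ciInf_of_finite (f := hM.isHermitian.eigenvalues)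
  exact hi ▸ hM.eigenvalues_pos i

theorem PosDef.condNum_pos [Nonempty m] {M : Matrix m m ℂ} (hM : M.PosDef) :
    0 < condNum hM.isHermitian := by
  have h := hM.iInf_eigenvalues_pos_s16
  refine div_pos (h.trans_le ?_) h
  exact (ciInf_le (Finite.bddBelow_range _) (Classical.arbitrary m)).trans
    (le_ciSup (Finite.bddAbove_range _) _)

theorem PosDef.le_smul_one_of_condNum_le [Nonempty m] {M : Matrix m m ℂ} (hM : M.PosDef)
    {κ : ℝ} (hκ : condNum hM.isHermitian ≤ κ) :
    M ≤ (κ * ⨅ i, hM.isHermitian.eigenvalues i) • (1 : Matrix m m ℂ) := by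
  have hμ := hM.iInf_eigenvalues_pos_s16
  refine hM.isHermitian.le_iSup_eigenvalues_smul_one.trans
    (smul_le_smul_of_nonneg_right ?_ zero_le_one)
  rwa [condNum, div_le_iff₀ hμ] at hκ

theorem add_smul_inv_le_of_smul_one_le {H : Matrix m m ℂ} {μ Λ : ℝ} (hμ : 0 < μ)
    (hμH : μ • (1 : Matrix m m ℂ) ≤ H) (hHΛ : H ≤ Λ • (1 : Matrix m m ℂ)) :
    H + (μ * Λ) • H⁻¹ ≤ (μ + Λ) • (1 : Matrix m m ℂ) := by
  have hH := (posDef_of_smul_one_le hμ hμH).isHermitian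
  rw [← Algebra.algebraMap_eq_smul_one] at hμH hHΛ ⊢
  have hlo := (algebraMap_le_iff_le_spectrum (a := H) hH.isSelfAdjoint).mp hμH
  have hhi := (le_algebraMap_iff_spectrum_le (a := H) hH.isSelfAdjoint).mp hHΛ
  have hunit : IsUnit H :=
    (spectrum.zero_notMem_iff ℝ).mp fun h0 => (hμ.trans_le (hlo 0 h0)).false
  have hcont (f : ℝ → ℝ) : ContinuousOn f (spectrum ℝ H) := finite_real_spectrum.continuousOn f
  have hcfc : cfc (fun t : ℝ => t + μ * Λ * t⁻¹) H = H + (μ * Λ) • H⁻¹ := by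
    rw [cfc_add H _ _ (hcont _) (hcont _), cfc_id' ℝ H, cfc_const_mul _ _ _ (hcont _),
      cfc_ringInverse_id H hunit, nonsing_inv_eq_ringInverse]
  rw [← hcfc]
  -- on the spectrum, `t + μΛ / t ≤ μ + Λ` is `(t - μ) (Λ - t) ≥ 0`
  refine cfc_le_algebraMap _ _ _ (fun t ht => ?_) (hcont _)
  have ht0 : 0 < t := hμ.trans_le (hlo t ht)
  rw [← div_eq_mul_inv, ← le_sub_iff_add_le', div_le_iff₀ ht0]
  nlinarith [hlo t ht, hhi t ht]

theorem kantorovich {H : Matrix m m ℂ} {μ Λ : ℝ} (hμ : 0 < μ) (hΛ : 0 < Λ)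
    (hμH : μ • (1 : Matrix m m ℂ) ≤ H) (hHΛ : H ≤ Λ • (1 : Matrix m m ℂ)) (x : m → ℂ) :
    (star x ⬝ᵥ H *ᵥ x).re * (star x ⬝ᵥ H⁻¹ *ᵥ x).re ≤
      (μ + Λ) ^ 2 / (4 * μ * Λ) * (star x ⬝ᵥ x).re ^ 2 := by
  have hH := posDef_of_smul_one_le hμ hμH
  have hkey := re_dotProduct_mulVec_le_of_le (add_smul_inv_le_of_smul_one_le hμ hμH hHΛ) x
  simp only [add_mulVec, smul_mulVec, one_mulVec, dotProduct_add, dotProduct_smul, add_re,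
    smul_re, smul_eq_mul] at hkey
  have hP := RCLike.re_to_complex ▸ hH.posSemidef.re_dotProduct_nonneg x
  have hQ := RCLike.re_to_complex ▸ hH.inv.posSemidef.re_dotProduct_nonneg x
  -- AM-GM: `4μΛ PQ ≤ (P + μΛ Q)² ≤ ((μ + Λ) xᴴx)²`
  rw [div_mul_eq_mul_div, le_div_iff₀ (by positivity)]
  nlinarith [sq_nonneg ((star x ⬝ᵥ H *ᵥ x).re - μ * Λ * (star x ⬝ᵥ H⁻¹ *ᵥ x).re),
    pow_le_pow_left₀ (by positivity) hkey 2]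

theorem isUnit_det_add_I_smul {H S : Matrix m m ℂ} (hH : H.PosDef) (hS : S.IsHermitian) :
    IsUnit (H + I • S).det := by
  rw [isUnit_iff_ne_zero]
  intro hdet
  obtain ⟨v, hv, hNv⟩ := exists_mulVec_eq_zero_iff.mpr hdet
  have h := congrArg (fun w => (star v ⬝ᵥ w).re) hNv
  have hSv := hS.im_star_dotProduct_mulVec_self v
  have hHv := hH.re_dotProduct_pos hv
  simp only [add_mulVec, smul_mulVec, dotProduct_add, dotProduct_smul, smul_eq_mul, add_re,
    mul_re, I_re, I_im, dotProduct_zero, zero_re] at h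
  simp only [RCLike.im_to_complex, RCLike.re_to_complex] at hSv hHv
  rw [hSv] at h
  linarith

theorem norm_dotProduct_inv_add_I_smul_mulVec_le {H S : Matrix m m ℂ} (hH : H.PosDef)
    (hS : S.IsHermitian) (x : m → ℂ) :
    ‖star x ⬝ᵥ (H + I • S)⁻¹ *ᵥ x‖ ≤ (star x ⬝ᵥ H⁻¹ *ᵥ x).re := by
  have hHdet : IsUnit H.det := (isUnit_iff_isUnit_det H).mp hH.isUnit
  have hNdet : IsUnit (H + I • S).det := isUnit_det_add_I_smul hH hS
  obtain ⟨z, rfl⟩ : ∃ z, (H + I • S) *ᵥ z = x := ⟨_, mulVec_inv_mulVec hNdet x⟩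
  set b := H⁻¹ *ᵥ S *ᵥ z
  have hHb : H *ᵥ b = S *ᵥ z := mulVec_inv_mulVec hHdet _
  have hy : H⁻¹ *ᵥ (H + I • S) *ᵥ z = z + I • b := by
    rw [add_mulVec, mulVec_add, smul_mulVec, mulVec_smul, inv_mulVec_mulVec hHdet]
  -- `zᴴ H b = zᴴ S z` is real, so `z` and `I • b` are orthogonal for the `H`-inner product.
  have hzy : (star z ⬝ᵥ H *ᵥ z).re ≤ (star (z + I • b) ⬝ᵥ H *ᵥ (z + I • b)).re := by
    have hcross : (star z ⬝ᵥ H *ᵥ b).im = 0 := by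
      rw [hHb]
      exact hS.im_star_dotProduct_mulVec_self z
    rw [hH.isHermitian.re_dotProduct_mulVec_add_I_smul, hcross]
    linarith [RCLike.re_to_complex ▸ hH.posSemidef.re_dotProduct_nonneg b]
  have hx : (H + I • S) *ᵥ z = H *ᵥ (z + I • b) := by rw [← hy, mulVec_inv_mulVec hHdet]
  rw [inv_mulVec_mulVec hNdet, hy, hx, hH.isHermitian.star_mulVec_dotProduct,
    hH.isHermitian.star_mulVec_dotProduct]
  have hcs := hH.posSemidef.norm_sq_dotProduct_mulVec_le (z + I • b) z
  have hz0 := RCLike.re_to_complex ▸ hH.posSemidef.re_dotProduct_nonneg z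
  nlinarith [norm_nonneg (star (z + I • b) ⬝ᵥ H *ᵥ z)]

theorem norm_dotProduct_inv_mulVec_le_of_rotation {B C : Matrix m m ℂ} (hB : B.PosDef)
    (hC : C.PosDef) {c s : ℝ} (hc : 0 < c) (hs : 0 < s) (hcs : c ^ 2 + s ^ 2 = 1) (x : m → ℂ) :
    ‖star x ⬝ᵥ (B + I • C)⁻¹ *ᵥ x‖ ≤ (star x ⬝ᵥ (c • B + s • C)⁻¹ *ᵥ x).re := by
  have hH : (c • B + s • C).PosDef := (hB.smul hc).add (hC.smul hs)
  have hS : (c • C - s • B).IsHermitian :=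
    (hC.isHermitian.smul (.all c)).sub (hB.isHermitian.smul (.all s))
  have hω : ‖(c : ℂ) + s * I‖ = 1 := by rw [norm_add_mul_I, hcs, Real.sqrt_one]
  have := invertibleOfNonzero (norm_ne_zero_iff.mp (hω ▸ one_ne_zero))
  rw [add_I_smul_eq_smul_add_I_smul B C hcs, inv_smul _ _ (isUnit_det_add_I_smul hH hS),
    invOf_eq_inv, smul_mulVec, dotProduct_smul, smul_eq_mul, norm_mul, norm_inv, hω, inv_one,
    one_mul]
  exact norm_dotProduct_inv_add_I_smul_mulVec_le hH hS x

theorem norm_dotProduct_mulVec_mul_norm_dotProduct_inv_mulVec_le {B C : Matrix m m ℂ}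
    {μB μC κ : ℝ} (hμB : 0 < μB) (hμC : 0 < μC) (hκ : 0 < κ)
    (hB : μB • (1 : Matrix m m ℂ) ≤ B) (hB' : B ≤ (κ * μB) • (1 : Matrix m m ℂ))
    (hC : μC • (1 : Matrix m m ℂ) ≤ C) (hC' : C ≤ (κ * μC) • (1 : Matrix m m ℂ)) (x : m → ℂ) :
    ‖star x ⬝ᵥ (B + I • C) *ᵥ x‖ * ‖star x ⬝ᵥ (B + I • C)⁻¹ *ᵥ x‖ ≤
      (1 + κ) ^ 2 / (4 * κ) * (star x ⬝ᵥ x).re ^ 2 := by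
  rcases eq_or_ne x 0 with rfl | hx
  · simp
  have hBpos := posDef_of_smul_one_le hμB hB
  have hCpos := posDef_of_smul_one_le hμC hC
  obtain ⟨c, s, hc, hs, hcs, hw⟩ := exists_norm_dotProduct_add_I_smul_mulVec_eq hBpos hCpos hx
  set μ := c * μB + s * μC
  have hμ : 0 < μ := by positivity
  have hlo : μ • (1 : Matrix m m ℂ) ≤ c • B + s • C := by
    rw [add_smul, mul_smul, mul_smul]
    gcongr
  have hhi : c • B + s • C ≤ (κ * μ) • (1 : Matrix m m ℂ) := by
    rw [show κ * μ = c * (κ * μB) + s * (κ * μC) by ring, add_smul, mul_smul c, mul_smul s]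
    gcongr
  calc ‖star x ⬝ᵥ (B + I • C) *ᵥ x‖ * ‖star x ⬝ᵥ (B + I • C)⁻¹ *ᵥ x‖
      ≤ (star x ⬝ᵥ (c • B + s • C) *ᵥ x).re * (star x ⬝ᵥ (c • B + s • C)⁻¹ *ᵥ x).re := by
        rw [hw]
        gcongr
        · exact hw ▸ norm_nonneg _
        · exact norm_dotProduct_inv_mulVec_le_of_rotation hBpos hCpos hc hs hcs x
    _ ≤ (μ + κ * μ) ^ 2 / (4 * μ * (κ * μ)) * (star x ⬝ᵥ x).re ^ 2 :=
        kantorovich hμ (by positivity) hlo hhi x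
    _ = (1 + κ) ^ 2 / (4 * κ) * (star x ⬝ᵥ x).re ^ 2 := by
        field_simp

theorem inv_fromBlocks_inr_inr {T : Matrix m m ℂ} {a b : m → ℂ} {d : ℂ} (hT : IsUnit T.det)
    (hM : IsUnit (fromBlocks T (replicateCol Unit a) (replicateRow Unit b) (of fun _ _ => d)).det) :
    d - b ⬝ᵥ T⁻¹ *ᵥ a ≠ 0 ∧
      (fromBlocks T (replicateCol Unit a) (replicateRow Unit b) (of fun _ _ => d))⁻¹
        (.inr ()) (.inr ()) = (d - b ⬝ᵥ T⁻¹ *ᵥ a)⁻¹ := by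
  set M := fromBlocks T (replicateCol Unit a) (replicateRow Unit b) (of fun _ _ => d)
  set y : m ⊕ Unit → ℂ := Sum.elim (-(T⁻¹ *ᵥ a)) 1
  have hMy : M *ᵥ y = Pi.single (.inr ()) (d - b ⬝ᵥ T⁻¹ *ᵥ a) := by
    ext (i | i)
    · simp only [M, y, fromBlocks_mulVec, Sum.elim_inl, Sum.elim_comp_inl, Sum.elim_comp_inr,
        mulVec_neg, mulVec_inv_mulVec hT]
      simp [mulVec, dotProduct]
    · simp [M, y, mulVec, dotProduct, sub_eq_neg_add]
  have hy := congrFun (inv_mulVec_mulVec hM y) (.inr ())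
  rw [hMy, mulVec_single] at hy
  have hσ : d - b ⬝ᵥ T⁻¹ *ᵥ a ≠ 0 := by
    intro h0
    simp [h0, y] at hy
  exact ⟨hσ, eq_inv_of_mul_eq_one_left (by simpa [y] using hy)⟩

theorem le_norm_sub_dotProduct_inv_mulVec {B C : Matrix (m ⊕ Unit) (m ⊕ Unit) ℂ}
    {μB μC κ : ℝ} (hμB : 0 < μB) (hμC : 0 < μC) (hκ : 0 < κ)
    (hB : μB • (1 : Matrix _ _ ℂ) ≤ B) (hB' : B ≤ (κ * μB) • (1 : Matrix _ _ ℂ))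
    (hC : μC • (1 : Matrix _ _ ℂ) ≤ C) (hC' : C ≤ (κ * μC) • (1 : Matrix _ _ ℂ))
    {T : Matrix m m ℂ} {a b : m → ℂ} {d : ℂ}
    (hBC : B + I • C = fromBlocks T (replicateCol Unit a) (replicateRow Unit b) (of fun _ _ => d)) :
    4 * κ / (1 + κ) ^ 2 * ‖d‖ ≤ ‖d - b ⬝ᵥ T⁻¹ *ᵥ a‖ := by
  have hBpos := posDef_of_smul_one_le hμB hB
  have hCpos := posDef_of_smul_one_le hμC hC
  have hT : T = B.submatrix Sum.inl Sum.inl + I • C.submatrix Sum.inl Sum.inl :=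
    (congrArg toBlocks₁₁ hBC).symm
  obtain ⟨hσ, hinv⟩ := inv_fromBlocks_inr_inr
    (hT ▸ isUnit_det_add_I_smul (hBpos.submatrix Sum.inl_injective) (hCpos.isHermitian.submatrix _))
    (hBC ▸ isUnit_det_add_I_smul hBpos hCpos.isHermitian)
  have h := norm_dotProduct_mulVec_mul_norm_dotProduct_inv_mulVec_le hμB hμC hκ hB hB' hC hC'
    (Pi.single (.inr ()) 1)
  rw [hBC, star_single_one_dotProduct_mulVec_single_one,
    star_single_one_dotProduct_mulVec_single_one, hinv] at h
  simp only [fromBlocks_apply₂₂, of_apply, norm_inv, Pi.star_single, star_one, dotProduct_single,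
    Pi.single_eq_same, mul_one, one_re, one_pow] at h
  rw [← div_eq_mul_inv, div_le_iff₀ (norm_pos_iff.mpr hσ)] at h
  calc 4 * κ / (1 + κ) ^ 2 * ‖d‖
      ≤ 4 * κ / (1 + κ) ^ 2 * ((1 + κ) ^ 2 / (4 * κ) * ‖d - b ⬝ᵥ T⁻¹ *ᵥ a‖) := by gcongr
    _ = ‖d - b ⬝ᵥ T⁻¹ *ᵥ a‖ := by field_simp

end

end Matrix

open Matrix

/-- Lower bound on the diagonal entries produced by Gaussian elimination on a
generalized Higham matrix `A = B + iC`: for `j ≥ k+1`,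
`|a_jj^{(k)}| = |a_jj - βᵀ A_k⁻¹ α| ≥ (4κ/(1+κ)²) |a_jj|`,
where `κ = max {κ(B), κ(C)}`. -/
theorem elimination_diagonal_lower_bound {n : ℕ}
    (A B C : Matrix (Fin n) (Fin n) ℂ)
    (hB : B.PosDef) (hC : C.PosDef)
    (hA : A = B + Complex.I • C)
    (κ : ℝ) (hκ : κ = max (condNum hB.isHermitian) (condNum hC.isHermitian))
    (k : ℕ) (hk : k < n) (j : Fin n) (hj : k ≤ j.val)
    (Ak : Matrix (Fin k) (Fin k) ℂ) (α β : Fin k → ℂ)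
    (hAk : Ak = A.submatrix (Fin.castLE hk.le) (Fin.castLE hk.le))
    (hα : α = fun i => A (Fin.castLE hk.le i) j)
    (hβ : β = fun i => A j (Fin.castLE hk.le i)) :
    4 * κ / (1 + κ) ^ 2 * ‖A j j‖ ≤
      ‖A j j - β ⬝ᵥ Ak⁻¹.mulVec α‖ := by
  have : Nonempty (Fin n) := ⟨j⟩
  have hκB : condNum hB.isHermitian ≤ κ := hκ ▸ le_max_left _ _
  have hκC : condNum hC.isHermitian ≤ κ := hκ ▸ le_max_right _ _
  set e : Fin k ⊕ Unit → Fin n := Sum.elim (Fin.castLE hk.le) fun _ => j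
  have he : Function.Injective e :=
    (Fin.castLE_injective _).sumElim (fun _ _ _ => rfl) fun i _ h => by
      have := congrArg Fin.val h
      simp only [Fin.val_castLE] at this
      omega
  refine le_norm_sub_dotProduct_inv_mulVec (B := B.submatrix e e) (C := C.submatrix e e)
    hB.iInf_eigenvalues_pos_s16 hC.iInf_eigenvalues_pos_s16 (hB.condNum_pos.trans_le hκB)
    (smul_one_le_submatrix hB.isHermitian.iInf_eigenvalues_smul_one_le he)
    (submatrix_le_smul_one (hB.le_smul_one_of_condNum_le hκB) he)
    (smul_one_le_submatrix hC.isHermitian.iInf_eigenvalues_smul_one_le he)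
    (submatrix_le_smul_one (hC.le_smul_one_of_condNum_le hκC) he) ?_
  subst hA hAk hα hβ
  ext (p | p) (q | q) <;> rfl
end

section
/- Let A = B + iC be an n×n generalized Higham matrix (B, C Hermitian positive definite) and let ρ_n(A) = max_{i,j,k}|a_{ij}^{(k)}| / max_{i,j}|a_{ij}| be the growth factor in Gaussian elimination without pivoting. Then 4κ/(1+κ)² ≤ ρ_n(A) ≤ 2(1+κ²)/(1+κ)² ≤ 2, where κ = max{κ(B), κ(C)} and κ(M) is the spectral condition number. -/
/-!
Rotating `A = B + iC` by a suitable `z ≠ 0` gives `zA = H + iK` with `H` positive definite and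
`-τH ≤ K ≤ τH`, where `τ = (κ - 1)/(κ + 1)`: the numerical range of `A` lies in the rectangle
`[λ_min B, λ_max B] × [λ_min C, λ_max C]`, whose opening angle seen from the origin is
controlled by `κ`. For such a pair, `|u*(H + iK)v| ≤ √(1 + τ²) ‖u‖_H ‖v‖_H`.

For `i, j ≥ k` the entry `a_ij^(k)` equals `e_i* A x`, where `x` agrees with `e_j` from position
`k` on and `A x` vanishes before position `k`. Then `‖x‖²_H = Re x*(zA)x = Re e_j*(zA)x`, and
two applications of the bound give `|z a_ij^(k)| ≤ (1 + τ²) √(h_ii h_jj) ≤ (1 + τ²) |z| max |a_pq|`.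
As `1 + τ² = 2(1 + κ²)/(1 + κ)²`, this is the upper bound; the lower one holds because
`ρ_n(A) ≥ 1 ≥ 4κ/(1 + κ)²`.
-/
open Matrix Complex Finset
open scoped ComplexOrder

/-- One step of Gaussian elimination (without pivoting) with pivot `k`. -/
noncomputable def elimStep {n : ℕ} (k : Fin n) (M : Matrix (Fin n) (Fin n) ℂ) :
    Matrix (Fin n) (Fin n) ℂ :=
  fun i j => if k < i ∧ k < j then M i j - M i k * (M k k)⁻¹ * M k j else M i j

/-- `elimIter A k = A^{(k)}`, the matrix after `k` steps of Gaussian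
elimination without pivoting applied to `A`. -/
noncomputable def elimIter {n : ℕ} (A : Matrix (Fin n) (Fin n) ℂ) : ℕ → Matrix (Fin n) (Fin n) ℂ
  | 0 => A
  | k + 1 => if h : k < n then elimStep ⟨k, h⟩ (elimIter A k) else elimIter A k

/-- The growth factor `ρ_n(A) = max_{i,j,k} |a_{ij}^{(k)}| / max_{i,j} |a_{ij}|`
of Gaussian elimination without pivoting. -/
noncomputable def growthFactor {n : ℕ} (A : Matrix (Fin (n + 1)) (Fin (n + 1)) ℂ) : ℝ :=
  ((Finset.range (n + 1)).product
      ((Finset.univ : Finset (Fin (n + 1))).product Finset.univ)).sup'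
      (Finset.Nonempty.product ⟨0, by simp⟩ (Finset.Nonempty.product Finset.univ_nonempty Finset.univ_nonempty))
      (fun p => ‖elimIter A p.1 p.2.1 p.2.2‖) /
    (Finset.univ.sup' Finset.univ_nonempty
      fun p : Fin (n + 1) × Fin (n + 1) => ‖A p.1 p.2‖)

section HermitianForms

variable {n 𝕜 : Type*} [Fintype n] [RCLike 𝕜]

theorem Matrix.PosSemidef.norm_dotProduct_mulVec_le {M : Matrix n n 𝕜} (hM : M.PosSemidef)
    (u v : n → 𝕜) :
    ‖star u ⬝ᵥ M *ᵥ v‖ ≤ √(RCLike.re (star u ⬝ᵥ M *ᵥ u)) * √(RCLike.re (star v ⬝ᵥ M *ᵥ v)) := by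
  let _ := M.toSeminormedAddCommGroup hM
  let _ := M.toInnerProductSpace hM
  have h := norm_inner_le_norm (𝕜 := 𝕜) u v
  rw [norm_eq_sqrt_re_inner (𝕜 := 𝕜) u, norm_eq_sqrt_re_inner (𝕜 := 𝕜) v] at h
  rwa [dotProduct_comm (star u), dotProduct_comm (star u), dotProduct_comm (star v)]

theorem Matrix.IsHermitian.star_mulVec_dotProduct_s18 {R : Type*} [CommSemiring R] [StarRing R]
    {M : Matrix n n R} (hM : M.IsHermitian) (x y : n → R) :
    star (M *ᵥ x) ⬝ᵥ y = star x ⬝ᵥ M *ᵥ y := by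
  rw [star_mulVec, hM.eq, dotProduct_mulVec]

open scoped MatrixOrder in
theorem Matrix.IsHermitian.posSemidef_sub_iInf_eigenvalues_smul [DecidableEq n]
    {M : Matrix n n 𝕜} (hM : M.IsHermitian) : (M - (⨅ i, hM.eigenvalues i) • 1).PosSemidef := by
  rw [← Algebra.algebraMap_eq_smul_one, ← le_iff]
  refine algebraMap_le_of_le_spectrum (fun r hr => ?_) hM.isSelfAdjoint
  obtain ⟨i, rfl⟩ := hM.spectrum_real_eq_range_eigenvalues ▸ hr
  exact ciInf_le (Set.finite_range _).bddBelow i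

open scoped MatrixOrder in
theorem Matrix.IsHermitian.posSemidef_iSup_eigenvalues_smul_sub [DecidableEq n]
    {M : Matrix n n 𝕜} (hM : M.IsHermitian) : ((⨆ i, hM.eigenvalues i) • 1 - M).PosSemidef := by
  rw [← Algebra.algebraMap_eq_smul_one, ← le_iff]
  refine le_algebraMap_of_spectrum_le (fun r hr => ?_) hM.isSelfAdjoint
  obtain ⟨i, rfl⟩ := hM.spectrum_real_eq_range_eigenvalues ▸ hr
  exact le_ciSup (Set.finite_range _).bddAbove i

theorem Matrix.IsHermitian.iInf_eigenvalues_le_iSup [DecidableEq n] [Nonempty n]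
    {M : Matrix n n 𝕜} (hM : M.IsHermitian) : ⨅ i, hM.eigenvalues i ≤ ⨆ i, hM.eigenvalues i :=
  ciInf_le_ciSup (Set.finite_range _).bddBelow (Set.finite_range _).bddAbove

theorem Matrix.PosDef.iInf_eigenvalues_pos_s18 [DecidableEq n] [Nonempty n] {M : Matrix n n 𝕜}
    (hM : M.PosDef) : 0 < ⨅ i, hM.1.eigenvalues i := by
  obtain ⟨i, hi⟩ := exists_eq_ciInf_of_finite (f := hM.1.eigenvalues)
  exact hi ▸ hM.eigenvalues_pos i

theorem Matrix.PosDef.one_le_condNum [DecidableEq n] [Nonempty n] {M : Matrix n n ℂ}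
    (hM : M.PosDef) : 1 ≤ condNum hM.isHermitian :=
  (one_le_div hM.iInf_eigenvalues_pos_s18).2 hM.1.iInf_eigenvalues_le_iSup

theorem Matrix.posSemidef_smul_add_smul [DecidableEq n] {B C : Matrix n n 𝕜}
    (hB : B.PosSemidef) (hC : C.PosSemidef) {p r : ℝ} (hr : 0 ≤ r)
    (h : 0 ≤ p * (⨆ i, hB.1.eigenvalues i) + r * ⨅ i, hC.1.eigenvalues i) :
    (p • B + r • C).PosSemidef := by
  rcases le_or_gt 0 p with hp | hp
  · exact (hB.smul hp).add (hC.smul hr)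
  · have hsplit : p • B + r • C = (-p) • ((⨆ i, hB.1.eigenvalues i) • 1 - B)
        + r • (C - (⨅ i, hC.1.eigenvalues i) • 1)
        + (p * (⨆ i, hB.1.eigenvalues i) + r * ⨅ i, hC.1.eigenvalues i) • (1 : Matrix n n 𝕜) := by
      module
    rw [hsplit]
    exact ((hB.1.posSemidef_iSup_eigenvalues_smul_sub.smul (neg_nonneg.2 hp.le)).add
      (hC.1.posSemidef_sub_iInf_eigenvalues_smul.smul hr)).add (PosSemidef.one.smul h)

end HermitianForms

theorem Real.sqrt_mul_sqrt_add_sqrt_mul_sqrt_le {a b c d : ℝ} (ha : 0 ≤ a) (hb : 0 ≤ b)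
    (hc : 0 ≤ c) (hd : 0 ≤ d) : √a * √b + √c * √d ≤ √(a + c) * √(b + d) := by
  rw [← Real.sqrt_mul (add_nonneg ha hc)]
  apply Real.le_sqrt_of_sq_le
  nlinarith [Real.sq_sqrt ha, Real.sq_sqrt hb, Real.sq_sqrt hc, Real.sq_sqrt hd,
    sq_nonneg (√a * √d - √c * √b)]

theorem two_mul_mul_sub_le_sq_sub_one_mul {κ β₁ β₂ γ₁ γ₂ : ℝ} (hβ₁ : 0 < β₁) (hγ₁ : 0 < γ₁)
    (hβ : β₁ ≤ β₂) (hγ : γ₁ ≤ γ₂) (hβκ : β₂ ≤ κ * β₁) (hγκ : γ₂ ≤ κ * γ₁) :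
    2 * κ * (β₂ * γ₂ - β₁ * γ₁) ≤ (κ ^ 2 - 1) * (β₁ * β₂ + γ₁ * γ₂) := by
  have hβ₂ : 0 < β₂ := hβ₁.trans_le hβ
  have hγ₂ : 0 < γ₂ := hγ₁.trans_le hγ
  have hκ : 1 ≤ κ := by nlinarith
  have hRHS : 0 ≤ (κ ^ 2 - 1) * (β₁ * β₂ + γ₁ * γ₂) :=
    mul_nonneg (by nlinarith) (by positivity)
  rcases le_or_gt (β₂ * γ₂) (β₁ * γ₁) with hXY | hXY
  · nlinarith
  have hX : β₂ * γ₂ ≤ κ ^ 2 * (β₁ * γ₁) := by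
    nlinarith [mul_le_mul hβκ hγκ hγ₂.le (by positivity)]
  -- with `X = β₂γ₂`, `Y = β₁γ₁`: `κ²(X - Y)² - (κ² - 1)²XY = (κ²X - Y)(X - κ²Y) ≤ 0`,
  -- and `4XY = 4(β₁β₂)(γ₁γ₂) ≤ (β₁β₂ + γ₁γ₂)²`
  have hsq : (2 * κ * (β₂ * γ₂ - β₁ * γ₁)) ^ 2 ≤ ((κ ^ 2 - 1) * (β₁ * β₂ + γ₁ * γ₂)) ^ 2 := by
    nlinarith [mul_nonpos_of_nonneg_of_nonpos (by nlinarith : 0 ≤ κ ^ 2 * (β₂ * γ₂) - β₁ * γ₁)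
      (sub_nonpos.2 hX), sq_nonneg (β₁ * β₂ - γ₁ * γ₂), sq_nonneg (κ ^ 2 - 1)]
  exact (pow_le_pow_iff_left₀ (by nlinarith) hRHS two_ne_zero).1 hsq

section SectorialForms

variable {n : Type*} [Fintype n] {H K : Matrix n n ℂ} {τ : ℝ}

theorem re_dotProduct_add_I_smul_mulVec_self (hK : K.IsHermitian) (x : n → ℂ) :
    (star x ⬝ᵥ (H + Complex.I • K) *ᵥ x).re = (star x ⬝ᵥ H *ᵥ x).re := by
  have him : (star x ⬝ᵥ K *ᵥ x).im = 0 := hK.im_star_dotProduct_mulVec_self x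
  simp [add_mulVec, smul_mulVec, dotProduct_add, him]

theorem norm_dotProduct_mulVec_le_of_posSemidef_smul_add_sub (hτ : 0 ≤ τ)
    (hP : (τ • H + K).PosSemidef) (hQ : (τ • H - K).PosSemidef) (u v : n → ℂ) :
    ‖star u ⬝ᵥ K *ᵥ v‖ ≤ τ * (√(star u ⬝ᵥ H *ᵥ u).re * √(star v ⬝ᵥ H *ᵥ v).re) := by
  have hK : star u ⬝ᵥ K *ᵥ v
      = (star u ⬝ᵥ (τ • H + K) *ᵥ v - star u ⬝ᵥ (τ • H - K) *ᵥ v) / 2 := by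
    simp only [add_mulVec, sub_mulVec, dotProduct_add, dotProduct_sub]
    ring
  have hsum (x : n → ℂ) :
      (star x ⬝ᵥ (τ • H + K) *ᵥ x).re + (star x ⬝ᵥ (τ • H - K) *ᵥ x).re
        = 2 * τ * (star x ⬝ᵥ H *ᵥ x).re := by
    simp [add_mulVec, sub_mulVec, smul_mulVec, dotProduct_add, dotProduct_sub]
    ring
  have h2τ : 0 ≤ 2 * τ := by positivity
  calc ‖star u ⬝ᵥ K *ᵥ v‖
      ≤ (‖star u ⬝ᵥ (τ • H + K) *ᵥ v‖ + ‖star u ⬝ᵥ (τ • H - K) *ᵥ v‖) / 2 := by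
        rw [hK, norm_div, Complex.norm_two]
        gcongr
        exact norm_sub_le _ _
    _ ≤ (√(star u ⬝ᵥ (τ • H + K) *ᵥ u).re * √(star v ⬝ᵥ (τ • H + K) *ᵥ v).re
          + √(star u ⬝ᵥ (τ • H - K) *ᵥ u).re * √(star v ⬝ᵥ (τ • H - K) *ᵥ v).re) / 2 := by
        gcongr
        · exact hP.norm_dotProduct_mulVec_le u v
        · exact hQ.norm_dotProduct_mulVec_le u v
    _ ≤ √(2 * τ * (star u ⬝ᵥ H *ᵥ u).re) * √(2 * τ * (star v ⬝ᵥ H *ᵥ v).re) / 2 := by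
        rw [← hsum, ← hsum]
        gcongr
        exact Real.sqrt_mul_sqrt_add_sqrt_mul_sqrt_le (hP.re_dotProduct_nonneg u)
          (hP.re_dotProduct_nonneg v) (hQ.re_dotProduct_nonneg u) (hQ.re_dotProduct_nonneg v)
    _ = τ * (√(star u ⬝ᵥ H *ᵥ u).re * √(star v ⬝ᵥ H *ᵥ v).re) := by
        rw [Real.sqrt_mul h2τ, Real.sqrt_mul h2τ]
        linear_combination (√(star u ⬝ᵥ H *ᵥ u).re * √(star v ⬝ᵥ H *ᵥ v).re / 2)
          * Real.mul_self_sqrt h2τ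

theorem norm_dotProduct_add_I_smul_mulVec_le [DecidableEq n] (hτ : 0 ≤ τ) (hH : H.PosDef)
    (hK : K.IsHermitian) (hP : (τ • H + K).PosSemidef) (hQ : (τ • H - K).PosSemidef)
    (u v : n → ℂ) :
    ‖star u ⬝ᵥ (H + Complex.I • K) *ᵥ v‖
      ≤ √(1 + τ ^ 2) * (√(star u ⬝ᵥ H *ᵥ u).re * √(star v ⬝ᵥ H *ᵥ v).re) := by
  -- `(H + iK) v = H (v + iz)` with `z = H⁻¹Kv`, and the cross terms of `‖v + iz‖²_H` cancel
  -- because `z*Hv = v*Kv` is real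
  have hnn (x : n → ℂ) : 0 ≤ (star x ⬝ᵥ H *ᵥ x).re := hH.posSemidef.re_dotProduct_nonneg x
  set z := H⁻¹ *ᵥ K *ᵥ v
  have hHz : H *ᵥ z = K *ᵥ v := by
    rw [mulVec_mulVec, mul_nonsing_inv _ ((isUnit_iff_isUnit_det H).1 hH.isUnit), one_mulVec]
  have hw : (H + Complex.I • K) *ᵥ v = H *ᵥ (v + Complex.I • z) := by
    rw [mulVec_add, mulVec_smul, hHz, add_mulVec, smul_mulVec]
  have hvz : star z ⬝ᵥ H *ᵥ v = star v ⬝ᵥ H *ᵥ z := by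
    rw [← hH.isHermitian.star_mulVec_dotProduct_s18, hHz, hK.star_mulVec_dotProduct_s18]
  have hnorm_w : (star (v + Complex.I • z) ⬝ᵥ H *ᵥ (v + Complex.I • z)).re
      = (star v ⬝ᵥ H *ᵥ v).re + (star z ⬝ᵥ H *ᵥ z).re := by
    simp only [star_add, star_smul, mulVec_add, mulVec_smul, dotProduct_add, add_dotProduct,
      dotProduct_smul, smul_dotProduct, hvz, Complex.star_def, Complex.conj_I, smul_eq_mul]
    rw [← Complex.add_re]
    congr 1
    linear_combination -(star z ⬝ᵥ H *ᵥ z) * Complex.I_sq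
  have hz : √(star z ⬝ᵥ H *ᵥ z).re ≤ τ * √(star v ⬝ᵥ H *ᵥ v).re := by
    have h := (Complex.re_le_norm _).trans
      (norm_dotProduct_mulVec_le_of_posSemidef_smul_add_sub hτ hP hQ z v)
    rw [← hHz] at h
    nlinarith [Real.mul_self_sqrt (hnn z), Real.sqrt_nonneg (star z ⬝ᵥ H *ᵥ z).re,
      mul_nonneg hτ (Real.sqrt_nonneg (star v ⬝ᵥ H *ᵥ v).re)]
  have hw_le : √(star (v + Complex.I • z) ⬝ᵥ H *ᵥ (v + Complex.I • z)).re
      ≤ √(1 + τ ^ 2) * √(star v ⬝ᵥ H *ᵥ v).re := by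
    rw [← Real.sqrt_mul (by positivity), hnorm_w]
    apply Real.sqrt_le_sqrt
    nlinarith [Real.mul_self_sqrt (hnn z), Real.mul_self_sqrt (hnn v),
      mul_self_le_mul_self (Real.sqrt_nonneg _) hz]
  calc ‖star u ⬝ᵥ (H + Complex.I • K) *ᵥ v‖
      = ‖star u ⬝ᵥ H *ᵥ (v + Complex.I • z)‖ := by rw [hw]
    _ ≤ √(star u ⬝ᵥ H *ᵥ u).re * √(star (v + Complex.I • z) ⬝ᵥ H *ᵥ (v + Complex.I • z)).re :=
        hH.posSemidef.norm_dotProduct_mulVec_le u _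
    _ ≤ √(star u ⬝ᵥ H *ᵥ u).re * (√(1 + τ ^ 2) * √(star v ⬝ᵥ H *ᵥ v).re) := by gcongr
    _ = √(1 + τ ^ 2) * (√(star u ⬝ᵥ H *ᵥ u).re * √(star v ⬝ᵥ H *ᵥ v).re) := by ring

end SectorialForms
section GaussianElimination

variable {N : ℕ}

theorem star_dotProduct_eq_apply_of_le {x y : Fin N → ℂ} {k : ℕ} {j : Fin N} (hj : k ≤ j)
    (hx : ∀ m : Fin N, k ≤ m → x m = (Pi.single j 1 : Fin N → ℂ) m)
    (hy : ∀ m : Fin N, m < k → y m = 0) :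
    star x ⬝ᵥ y = y j := by
  rw [dotProduct, Finset.sum_eq_single j]
  · simp [hx j hj]
  · intro m _ hmj
    rcases lt_or_ge (m : ℕ) k with hmk | hmk
    · simp [hy m hmk]
    · simp [hx m hmk, hmj]
  · simp

variable (M : Matrix (Fin N) (Fin N) ℂ)

/-- The vector `x` equal to `e_j` from position `k` on with `(M x)_m = 0` for `m < k`, so that
`M^{(k)}_{ij} = (M x)_i` for `i, j ≥ k` (a column of the Schur complement). -/
noncomputable def elimVec : ℕ → Fin N → Fin N → ℂ
  | 0, j => Pi.single j 1
  | k + 1, j =>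
    if hk : k < N then
      elimVec k j - ((M *ᵥ elimVec k j) ⟨k, hk⟩ / (M *ᵥ elimVec k ⟨k, hk⟩) ⟨k, hk⟩) •
        elimVec k ⟨k, hk⟩
    else elimVec k j

theorem elimVec_apply_of_le (k : ℕ) (j m : Fin N) (hm : k ≤ m) :
    elimVec M k j m = (Pi.single j 1 : Fin N → ℂ) m := by
  induction k generalizing j with
  | zero => rfl
  | succ k ih =>
    rw [elimVec]
    split_ifs with hk
    · have hkm : m ≠ ⟨k, hk⟩ := Fin.ne_of_gt (Fin.lt_def.2 hm)
      simp [ih j (by omega), ih ⟨k, hk⟩ (by omega), hkm]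
    · exact ih j (by omega)

theorem elimIter_eq_mulVec_elimVec (k : ℕ) (i j : Fin N) (hi : k ≤ i) (hj : k ≤ j) :
    elimIter M k i j = (M *ᵥ elimVec M k j) i := by
  induction k generalizing i j with
  | zero => simp [elimIter, elimVec]
  | succ k ih =>
    have hk : k < N := by omega
    have hki : (⟨k, hk⟩ : Fin N) < i := Fin.lt_def.2 hi
    have hkj : (⟨k, hk⟩ : Fin N) < j := Fin.lt_def.2 hj
    rw [elimIter, dif_pos hk, elimStep, if_pos ⟨hki, hkj⟩, elimVec, dif_pos hk,
      ih i j (by omega) (by omega), ih i ⟨k, hk⟩ (by omega) le_rfl,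
      ih ⟨k, hk⟩ j le_rfl (by omega), ih ⟨k, hk⟩ ⟨k, hk⟩ le_rfl le_rfl]
    simp only [mulVec_sub, mulVec_smul, Pi.sub_apply, Pi.smul_apply, smul_eq_mul]
    ring

variable {M}

theorem mulVec_elimVec_apply_of_lt (hM : ∀ x ≠ 0, star x ⬝ᵥ M *ᵥ x ≠ 0) (k : ℕ) (j m : Fin N)
    (hm : m < k) : (M *ᵥ elimVec M k j) m = 0 := by
  induction k generalizing j m with
  | zero => exact absurd hm (Nat.not_lt_zero _)
  | succ k ih =>
    rw [elimVec]
    split_ifs with hk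
    · have hpivot : (M *ᵥ elimVec M k ⟨k, hk⟩) ⟨k, hk⟩ ≠ 0 := by
        rw [← star_dotProduct_eq_apply_of_le (k := k) le_rfl (elimVec_apply_of_le M k _)
          (fun m hm => ih _ m hm)]
        refine hM _ fun h => ?_
        simpa [h] using elimVec_apply_of_le M k ⟨k, hk⟩ ⟨k, hk⟩ le_rfl
      simp only [mulVec_sub, mulVec_smul, Pi.sub_apply, Pi.smul_apply, smul_eq_mul]
      rcases lt_or_eq_of_le (Nat.lt_succ_iff.1 hm) with hmk | hmk
      · simp [ih j m hmk, ih ⟨k, hk⟩ m hmk]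
      · obtain rfl : m = ⟨k, hk⟩ := Fin.ext hmk
        rw [div_mul_cancel₀ _ hpivot, sub_self]
    · exact ih j m (by omega)

theorem exists_elimIter_eq_mulVec (hM : ∀ x ≠ 0, star x ⬝ᵥ M *ᵥ x ≠ 0) {k : ℕ} {i j : Fin N}
    (hi : k ≤ i) (hj : k ≤ j) :
    ∃ x, elimIter M k i j = (M *ᵥ x) i ∧ star x ⬝ᵥ M *ᵥ x = (M *ᵥ x) j :=
  ⟨elimVec M k j, elimIter_eq_mulVec_elimVec M k i j hi hj,
    star_dotProduct_eq_apply_of_le hj (elimVec_apply_of_le M k j)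
      (mulVec_elimVec_apply_of_lt hM k j)⟩

theorem elimIter_apply_eq_min (A : Matrix (Fin N) (Fin N) ℂ) (k : ℕ) (i j : Fin N) :
    elimIter A k i j = elimIter A (min k (min i j)) i j := by
  induction k with
  | zero => simp
  | succ k ih =>
    rw [elimIter]
    split_ifs with hk
    · by_cases hkij : k < min (i : ℕ) j
      · rw [min_eq_left (by omega : k + 1 ≤ min (i : ℕ) j), elimIter, dif_pos hk]
      · rw [elimStep, if_neg (by simp only [Fin.lt_def]; omega), ih,
          min_eq_right (by omega : min (i : ℕ) j ≤ k),
          min_eq_right (by omega : min (i : ℕ) j ≤ k + 1)]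
    · have := i.isLt
      rw [ih, min_eq_right (by omega : min (i : ℕ) j ≤ k),
        min_eq_right (by omega : min (i : ℕ) j ≤ k + 1)]

theorem elimIter_smul (z : ℂ) (A : Matrix (Fin N) (Fin N) ℂ) (k : ℕ) :
    elimIter (z • A) k = z • elimIter A k := by
  induction k with
  | zero => rfl
  | succ k ih =>
    simp only [elimIter]
    split_ifs with hk
    · ext i j
      simp only [elimStep, ih, Matrix.smul_apply, smul_eq_mul]
      split_ifs
      · rcases eq_or_ne z 0 with rfl | hz
        · simp
        · field_simp
      · rfl
    · exact ih

end GaussianElimination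

theorem norm_elimIter_add_I_smul_le {N : ℕ} {H K : Matrix (Fin N) (Fin N) ℂ} {τ : ℝ} (hτ : 0 ≤ τ)
    (hH : H.PosDef) (hK : K.IsHermitian) (hP : (τ • H + K).PosSemidef)
    (hQ : (τ • H - K).PosSemidef) (k : ℕ) (i j : Fin N) :
    ‖elimIter (H + Complex.I • K) k i j‖ ≤ (1 + τ ^ 2) * (√(H i i).re * √(H j j).re) := by
  have hre := re_dotProduct_add_I_smul_mulVec_self (H := H) hK
  have hM : ∀ x ≠ 0, star x ⬝ᵥ (H + Complex.I • K) *ᵥ x ≠ 0 := fun x hx h => by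
    have hpos : 0 < (star x ⬝ᵥ H *ᵥ x).re := hH.re_dotProduct_pos hx
    rw [← hre, h, Complex.zero_re] at hpos
    exact lt_irrefl 0 hpos
  have hsingle (m : Fin N) (v : Fin N → ℂ) : star (Pi.single m 1) ⬝ᵥ v = v m := by simp
  have hdiag (m : Fin N) : (H *ᵥ Pi.single m 1) m = H m m := by simp
  have hbound (m : Fin N) (x : Fin N → ℂ) := norm_dotProduct_add_I_smul_mulVec_le hτ hH hK hP hQ
    (Pi.single m 1) x
  simp only [hsingle, hdiag] at hbound
  rw [elimIter_apply_eq_min]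
  obtain ⟨x, hij, hxx⟩ :=
    exists_elimIter_eq_mulVec hM (k := min k (min i j)) (i := i) (j := j) (by omega) (by omega)
  set σ := √(1 + τ ^ 2)
  have hσ : σ * σ = 1 + τ ^ 2 := Real.mul_self_sqrt (by positivity)
  have hx : √(star x ⬝ᵥ H *ᵥ x).re ≤ σ * √(H j j).re := by
    have h := (Complex.re_le_norm _).trans (hbound j x)
    rw [← hxx, hre] at h
    have hxH : 0 ≤ (star x ⬝ᵥ H *ᵥ x).re := hH.posSemidef.re_dotProduct_nonneg x
    nlinarith [Real.mul_self_sqrt hxH, Real.sqrt_nonneg (star x ⬝ᵥ H *ᵥ x).re,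
      mul_nonneg (Real.sqrt_nonneg (1 + τ ^ 2)) (Real.sqrt_nonneg (H j j).re)]
  calc ‖elimIter (H + Complex.I • K) (min k (min i j)) i j‖
      ≤ σ * (√(H i i).re * √(star x ⬝ᵥ H *ᵥ x).re) := hij ▸ hbound i x
    _ ≤ σ * (√(H i i).re * (σ * √(H j j).re)) := by gcongr
    _ = (1 + τ ^ 2) * (√(H i i).re * √(H j j).re) := by rw [← hσ]; ring

/-- The numerical range of `A` lies in a sector of half-angle `arctan τ` with vertex `0`:
after rotation by `z`, the Hermitian part `H` of `zA` is positive definite and the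
Hermitian `K` with `zA = H + iK` satisfies `-τH ≤ K ≤ τH`. -/
def IsSectorial {n : Type*} (A : Matrix n n ℂ) (τ : ℝ) : Prop :=
  ∃ z : ℂ, z ≠ 0 ∧ ∃ H K : Matrix n n ℂ, z • A = H + Complex.I • K ∧ H.PosDef ∧
    K.IsHermitian ∧ (τ • H + K).PosSemidef ∧ (τ • H - K).PosSemidef

theorem IsSectorial.norm_elimIter_le {N : ℕ} {A : Matrix (Fin N) (Fin N) ℂ} {τ : ℝ}
    (hA : IsSectorial A τ) (hτ : 0 ≤ τ) {D : ℝ}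
    (hD : ∀ p q, ‖A p q‖ ≤ D) (k : ℕ) (i j : Fin N) :
    ‖elimIter A k i j‖ ≤ (1 + τ ^ 2) * D := by
  obtain ⟨z, hz, H, K, hzA, hH, hK, hP, hQ⟩ := hA
  have hHD (m : Fin N) : (H m m).re ≤ ‖z‖ * D := by
    have h : (H m m).re = ((z • A) m m).re := by
      rw [hzA, Matrix.add_apply, Matrix.smul_apply, ← hK.coe_re_apply_self m]
      simp
    rw [h, Matrix.smul_apply, smul_eq_mul]
    exact (Complex.re_le_norm _).trans (by rw [norm_mul]; gcongr; exact hD m m)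
  have hHH : √(H i i).re * √(H j j).re ≤ ‖z‖ * D := by
    have hzD : 0 ≤ ‖z‖ * D := mul_nonneg (norm_nonneg z) ((norm_nonneg _).trans (hD i i))
    calc √(H i i).re * √(H j j).re ≤ √(‖z‖ * D) * √(‖z‖ * D) := by gcongr <;> exact hHD _
      _ = ‖z‖ * D := Real.mul_self_sqrt hzD
  have h := norm_elimIter_add_I_smul_le hτ hH hK hP hQ k i j
  rw [← hzA, elimIter_smul, Matrix.smul_apply, norm_smul] at h
  refine le_of_mul_le_mul_left ?_ (norm_pos_iff.2 hz)
  calc ‖z‖ * ‖elimIter A k i j‖ ≤ (1 + τ ^ 2) * (√(H i i).re * √(H j j).re) := h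
    _ ≤ (1 + τ ^ 2) * (‖z‖ * D) := by gcongr
    _ = ‖z‖ * ((1 + τ ^ 2) * D) := by ring

section GrowthFactor

variable {n : ℕ} {A : Matrix (Fin (n + 1)) (Fin (n + 1)) ℂ}

theorem IsSectorial.growthFactor_le {τ : ℝ} (hA : IsSectorial A τ) (hτ : 0 ≤ τ) :
    growthFactor A ≤ 1 + τ ^ 2 := by
  have hD (p q : Fin (n + 1)) : ‖A p q‖ ≤ Finset.univ.sup' Finset.univ_nonempty
      fun p : Fin (n + 1) × Fin (n + 1) => ‖A p.1 p.2‖ :=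
    Finset.le_sup' (fun p : Fin (n + 1) × Fin (n + 1) => ‖A p.1 p.2‖) (Finset.mem_univ (p, q))
  refine div_le_of_le_mul₀ ((norm_nonneg _).trans (hD 0 0)) (by positivity) ?_
  exact Finset.sup'_le _ _ fun p _ => hA.norm_elimIter_le hτ hD p.1 p.2.1 p.2.2

theorem one_le_growthFactor (hA : A ≠ 0) : 1 ≤ growthFactor A := by
  obtain ⟨p, q, hpq⟩ : ∃ p q, A p q ≠ 0 := by
    by_contra! h
    exact hA (Matrix.ext h)
  refine (one_le_div ?_).2 (Finset.sup'_le _ _ fun p _ => ?_)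
  · exact (norm_pos_iff.2 hpq).trans_le
      (Finset.le_sup' (fun p : Fin (n + 1) × Fin (n + 1) => ‖A p.1 p.2‖) (Finset.mem_univ (p, q)))
  · exact Finset.le_sup' (fun p : ℕ × Fin (n + 1) × Fin (n + 1) => ‖elimIter A p.1 p.2.1 p.2.2‖)
      (Finset.mk_mem_product (Finset.mem_range.2 n.succ_pos) (Finset.mem_univ p))

end GrowthFactor

theorem isSectorial_add_I_smul {n : Type*} [Fintype n] [DecidableEq n] [Nonempty n]
    {B C : Matrix n n ℂ} (hB : B.PosDef) (hC : C.PosDef) {κ : ℝ}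
    (hκB : condNum hB.isHermitian ≤ κ) (hκC : condNum hC.isHermitian ≤ κ) :
    IsSectorial (B + Complex.I • C) ((κ - 1) / (κ + 1)) := by
  set β₁ := ⨅ i, hB.1.eigenvalues i
  set β₂ := ⨆ i, hB.1.eigenvalues i
  set γ₁ := ⨅ i, hC.1.eigenvalues i
  set γ₂ := ⨆ i, hC.1.eigenvalues i
  have hβ₁ : 0 < β₁ := hB.iInf_eigenvalues_pos_s18
  have hγ₁ : 0 < γ₁ := hC.iInf_eigenvalues_pos_s18
  have hβ : β₁ ≤ β₂ := hB.1.iInf_eigenvalues_le_iSup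
  have hγ : γ₁ ≤ γ₂ := hC.1.iInf_eigenvalues_le_iSup
  have hβκ : β₂ ≤ κ * β₁ := (div_le_iff₀ hβ₁).1 hκB
  have hγκ : γ₂ ≤ κ * γ₁ := (div_le_iff₀ hγ₁).1 hκC
  have hκ : 1 ≤ κ := hB.one_le_condNum.trans hκB
  set t := (κ - 1) / (κ + 1)
  have ht : 0 ≤ t := div_nonneg (by linarith) (by linarith)
  have hcorner : 0 ≤ 2 * t * (β₁ * β₂ + γ₁ * γ₂) - (1 - t ^ 2) * (β₂ * γ₂ - β₁ * γ₁) := by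
    have key := two_mul_mul_sub_le_sq_sub_one_mul hβ₁ hγ₁ hβ hγ hβκ hγκ
    have h : (κ + 1) ^ 2 * (2 * t * (β₁ * β₂ + γ₁ * γ₂) - (1 - t ^ 2) * (β₂ * γ₂ - β₁ * γ₁))
        = 2 * ((κ ^ 2 - 1) * (β₁ * β₂ + γ₁ * γ₂) - 2 * κ * (β₂ * γ₂ - β₁ * γ₁)) := by
      simp only [t]
      field_simp
      ring
    exact nonneg_of_mul_nonneg_right (by rw [h]; linarith) (by positivity)
  -- `z = (1 + it) conj (β₁ + iγ₂) + (1 - it) conj (β₂ + iγ₁)` turns both extreme corners of the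
  -- rectangle `[β₁, β₂] × [γ₁, γ₂]` enclosing the numerical range onto the edges of the sector
  set c := β₁ + β₂ + t * (γ₂ - γ₁)
  set s := γ₁ + γ₂ + t * (β₂ - β₁)
  have hc : 0 < c := by nlinarith
  have hs : 0 < s := by nlinarith
  refine ⟨c - s * Complex.I, fun h => by simpa [hc.ne'] using congrArg Complex.re h,
    c • B + s • C, c • C - s • B, ?_, (hB.smul hc).add_posSemidef (hC.posSemidef.smul hs.le),
    (hC.1.smul (IsSelfAdjoint.all c)).sub (hB.1.smul (IsSelfAdjoint.all s)), ?_, ?_⟩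
  · ext i j
    simp only [Matrix.smul_apply, Matrix.add_apply, Matrix.sub_apply, smul_eq_mul,
      Complex.real_smul]
    linear_combination -(s * C i j) * Complex.I_sq
  · rw [show t • (c • B + s • C) + (c • C - s • B) = (t * c - s) • B + (t * s + c) • C by module]
    exact posSemidef_smul_add_smul hB.posSemidef hC.posSemidef (by positivity)
      (hcorner.trans_eq (by ring))
  · rw [show t • (c • B + s • C) - (c • C - s • B) = (t * s - c) • C + (t * c + s) • B by module]
    exact posSemidef_smul_add_smul hC.posSemidef hB.posSemidef (by positivity)
      (hcorner.trans_eq (by ring))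

/-- For a generalized Higham matrix `A = B + iC` with `κ = max {κ(B), κ(C)}`,
the growth factor satisfies `4κ/(1+κ)² ≤ ρ_n(A) ≤ 2(1+κ²)/(1+κ)² ≤ 2`. -/
theorem growth_factor_generalized_higham {n : ℕ}
    (A B C : Matrix (Fin (n + 1)) (Fin (n + 1)) ℂ)
    (hB : B.PosDef) (hC : C.PosDef)
    (hA : A = B + Complex.I • C)
    (κ : ℝ) (hκ : κ = max (condNum hB.isHermitian) (condNum hC.isHermitian)) :
    4 * κ / (1 + κ) ^ 2 ≤ growthFactor A ∧
      growthFactor A ≤ 2 * (1 + κ ^ 2) / (1 + κ) ^ 2 ∧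
      2 * (1 + κ ^ 2) / (1 + κ) ^ 2 ≤ 2 := by
  have hκ₁ : 1 ≤ κ := hκ ▸ hB.one_le_condNum.trans (le_max_left _ _)
  have hsect : IsSectorial A ((κ - 1) / (κ + 1)) :=
    hA ▸ isSectorial_add_I_smul hB hC (hκ ▸ le_max_left _ _) (hκ ▸ le_max_right _ _)
  have hA₀ : A ≠ 0 := by
    rintro rfl
    have hpos : 0 < (star (Pi.single 0 1) ⬝ᵥ B *ᵥ Pi.single 0 1).re :=
      hB.re_dotProduct_pos (by simp)
    rw [← re_dotProduct_add_I_smul_mulVec_self hC.isHermitian, ← hA] at hpos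
    simp at hpos
  have hρ : 1 + ((κ - 1) / (κ + 1)) ^ 2 = 2 * (1 + κ ^ 2) / (1 + κ) ^ 2 := by
    field_simp
    ring
  refine ⟨?_, hρ ▸ hsect.growthFactor_le (div_nonneg (by linarith) (by linarith)), ?_⟩
  · calc 4 * κ / (1 + κ) ^ 2 ≤ 1 :=
        div_le_one_of_le₀ (by nlinarith [sq_nonneg (κ - 1)]) (sq_nonneg _)
      _ ≤ growthFactor A := one_le_growthFactor hA₀
  · rw [div_le_iff₀ (by positivity)]
    nlinarith
end

section
/- For a complex symmetric positive definite matrix A, the growth factor in Gaussian elimination without pivoting simplifies to ρ_n(A) = max_{j,k}|a_{jj}^{(k)}| / max_j |a_{jj}|; that is, the maxima in the definition of ρ_n(A) are attained on diagonal entries. -/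
open Matrix Complex Finset

/-! The quadratic form `x^* A x = x^* B x + i x^* C x` of `A = B + iC` has positive real and
imaginary parts for `x ≠ 0`. Together with symmetry, this property of the active block passes to
the Schur complement computed by an elimination step, since `x^* S x = y^* A y` for a suitable
`y`. Testing it on real vectors `a e_i + b e_j` gives `(Re a_ij)^2 ≤ Re a_ii Re a_jj` and the same
for imaginary parts, whence `|a_ij|^2 ≤ Re (conj a_ii * a_jj) ≤ |a_ii| |a_jj|`. As entry `(i, j)`
is no longer changed after step `min i j`, every entry of every `A^{(k)}` is bounded by a diagonal
entry of some `A^{(m)}`. -/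

section CSPDOn

open scoped ComplexOrder ComplexConjugate

variable {ι : Type*} [Fintype ι]

/-- CSPD-ness of the block of `M` on `s`, phrased through the quadratic form: for a symmetric block
`B + iC` (`B`, `C` real) one has `x^* M x = x^* B x + i x^* C x` with both forms real, so this says
`B`, `C` are positive definite; unlike the splitting, the form survives Schur complements. -/
structure IsCSPDOn (s : Set ι) (M : Matrix ι ι ℂ) : Prop where
  symm : ∀ i ∈ s, ∀ j ∈ s, M i j = M j i
  pos : ∀ x : ι → ℂ, x ≠ 0 → (∀ i ∉ s, x i = 0) →
    0 < (star x ⬝ᵥ M *ᵥ x).re ∧ 0 < (star x ⬝ᵥ M *ᵥ x).im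

theorem IsCSPDOn.mono {s t : Set ι} {M : Matrix ι ι ℂ} (h : IsCSPDOn s M) (hts : t ⊆ s) :
    IsCSPDOn t M where
  symm i hi j hj := h.symm i (hts hi) j (hts hj)
  pos x hx hxt := h.pos x hx fun i hi => hxt i fun hit => hi (hts hit)

theorem Matrix.IsSymm.star_dotProduct_map_ofReal_mulVec {B : Matrix ι ι ℝ} (hB : B.IsSymm)
    (x : ι → ℂ) :
    star x ⬝ᵥ B.map ofReal *ᵥ x =
      (((fun i => (x i).re) ⬝ᵥ B *ᵥ fun i => (x i).re) +
        ((fun i => (x i).im) ⬝ᵥ B *ᵥ fun i => (x i).im) : ℝ) := by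
  have hswap :
      ∑ i, ∑ j, B i j * (x i).re * (x j).im = ∑ i, ∑ j, B i j * (x i).im * (x j).re := by
    rw [Finset.sum_comm]
    refine Finset.sum_congr rfl fun i _ => Finset.sum_congr rfl fun j _ => ?_
    rw [hB.apply]; ring
  apply Complex.ext
  · simp only [dotProduct, mulVec, Finset.mul_sum, re_sum, ofReal_re, ← Finset.sum_add_distrib]
    refine Finset.sum_congr rfl fun i _ => Finset.sum_congr rfl fun j _ => ?_
    simp [mul_re, mul_im]
  · have : ∀ i j, (star x i * (B.map ofReal i j * x j)).im =
        B i j * (x i).re * (x j).im - B i j * (x i).im * (x j).re := by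
      intro i j
      simp only [Pi.star_apply, RCLike.star_def, map_apply, mul_re, mul_im, conj_re, conj_im,
        ofReal_re, ofReal_im]
      ring
    simp only [dotProduct, mulVec, Finset.mul_sum, im_sum, this, Finset.sum_sub_distrib, hswap,
      sub_self, ofReal_im]

theorem Matrix.PosDef.map_ofReal {B : Matrix ι ι ℝ} (hB : B.PosDef) :
    (B.map ofReal).PosDef := by
  refine .of_dotProduct_mulVec_pos (hB.isHermitian.map _ fun r => (conj_ofReal r).symm)
    fun x hx => ?_
  have huv : (fun i => (x i).re) ≠ 0 ∨ (fun i => (x i).im) ≠ 0 := by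
    by_contra! h
    exact hx (funext fun i => Complex.ext (congrFun h.1 i) (congrFun h.2 i))
  rw [(isHermitian_iff_isSymm.mp hB.isHermitian).star_dotProduct_map_ofReal_mulVec,
    zero_lt_real, ← star_trivial (fun i => (x i).re), ← star_trivial (fun i => (x i).im)]
  rcases huv with hu | hv
  · exact add_pos_of_pos_of_nonneg (hB.dotProduct_mulVec_pos hu)
      (hB.posSemidef.dotProduct_mulVec_nonneg _)
  · exact add_pos_of_nonneg_of_pos (hB.posSemidef.dotProduct_mulVec_nonneg _)
      (hB.dotProduct_mulVec_pos hv)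

theorem IsCSPD.isCSPDOn [DecidableEq ι] {A : Matrix ι ι ℂ} (hA : IsCSPD A) (s : Set ι) :
    IsCSPDOn s A := by
  obtain ⟨B, C, hBs, hB, hCs, hC, rfl⟩ := hA
  refine ⟨fun i _ j _ => ?_, fun x hx _ => ?_⟩
  · simp [hBs.apply, hCs.apply]
  · obtain ⟨hBre, hBim⟩ := pos_iff.mp (hB.map_ofReal.dotProduct_mulVec_pos hx)
    obtain ⟨hCre, hCim⟩ := pos_iff.mp (hC.map_ofReal.dotProduct_mulVec_pos hx)
    simp only [add_mulVec, smul_mulVec, dotProduct_add, dotProduct_smul, smul_eq_mul, add_re,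
      add_im, mul_re, mul_im, I_re, I_im]
    constructor <;> linarith

theorem star_dotProduct_mulVec_single_add_single [DecidableEq ι] (M : Matrix ι ι ℂ) (i j : ι)
    (a b : ℝ) :
    star (Pi.single i (a : ℂ) + Pi.single j (b : ℂ)) ⬝ᵥ
        M *ᵥ (Pi.single i (a : ℂ) + Pi.single j b) =
      a ^ 2 * M i i + a * b * (M i j + M j i) + b ^ 2 * M j j := by
  simp only [star_add, Pi.star_single, RCLike.star_def, conj_ofReal, mulVec_add, mulVec_single,
    op_smul_eq_smul, Complex.coe_smul, dotProduct_add, dotProduct_smul, add_dotProduct,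
    single_dotProduct, col_apply, smul_add, real_smul]
  ring

theorem sq_lt_mul_of_forall_quadratic_pos {p q r : ℝ}
    (h : ∀ a b : ℝ, (a, b) ≠ 0 → 0 < a ^ 2 * p + 2 * a * b * q + b ^ 2 * r) :
    q ^ 2 < p * r := by
  have hp : 0 < p := by simpa using h 1 0 (by simp)
  have := h q (-p) (by simp [hp.ne'])
  nlinarith

theorem Complex.norm_le_max_of_sq_le {z u w : ℂ} (hre : z.re ^ 2 ≤ u.re * w.re)
    (him : z.im ^ 2 ≤ u.im * w.im) : ‖z‖ ≤ max ‖u‖ ‖w‖ := by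
  have hz : ‖z‖ ^ 2 ≤ max ‖u‖ ‖w‖ ^ 2 :=
    calc ‖z‖ ^ 2 = z.re ^ 2 + z.im ^ 2 := by rw [Complex.sq_norm, normSq_apply]; ring
      _ ≤ (conj u * w).re := by simp only [mul_re, conj_re, conj_im]; linarith
      _ ≤ ‖u‖ * ‖w‖ := by simpa using re_le_norm (conj u * w)
      _ ≤ max ‖u‖ ‖w‖ ^ 2 := by
        rw [sq]; gcongr
        exacts [le_max_left _ _, le_max_right _ _]
  exact (pow_le_pow_iff_left₀ (norm_nonneg _) ((norm_nonneg _).trans (le_max_left _ _))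
    two_ne_zero).mp hz

namespace IsCSPDOn

variable [DecidableEq ι] {s : Set ι} {M : Matrix ι ι ℂ}

theorem apply_self_ne_zero (h : IsCSPDOn s M) {i : ι} (hi : i ∈ s) : M i i ≠ 0 := by
  have hx : (Pi.single i 1 : ι → ℂ) ≠ 0 := by simp
  have := (h.pos _ hx fun j hj => Pi.single_eq_of_ne (ne_of_mem_of_not_mem hi hj).symm _).1
  intro h0
  simp [h0] at this

theorem norm_apply_le_max (h : IsCSPDOn s M) {i j : ι} (hi : i ∈ s) (hj : j ∈ s) :
    ‖M i j‖ ≤ max ‖M i i‖ ‖M j j‖ := by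
  rcases eq_or_ne i j with rfl | hij
  · exact le_max_left _ _
  have hform (a b : ℝ) (hab : (a, b) ≠ 0) :
      0 < a ^ 2 * (M i i).re + 2 * a * b * (M i j).re + b ^ 2 * (M j j).re ∧
        0 < a ^ 2 * (M i i).im + 2 * a * b * (M i j).im + b ^ 2 * (M j j).im := by
    have hx : (Pi.single i (a : ℂ) + Pi.single j (b : ℂ) : ι → ℂ) ≠ 0 := by
      intro h0
      have ha := congrFun h0 i
      have hb := congrFun h0 j
      simp only [Pi.add_apply, Pi.single_eq_same, Pi.single_eq_of_ne hij, Pi.single_eq_of_ne hij.symm,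
        add_zero, zero_add, Pi.zero_apply, ofReal_eq_zero] at ha hb
      exact hab (Prod.ext ha hb)
    have hsupp : ∀ k ∉ s, (Pi.single i (a : ℂ) + Pi.single j (b : ℂ) : ι → ℂ) k = 0 :=
      fun k hk => by simp [ne_of_mem_of_not_mem hi hk |>.symm, ne_of_mem_of_not_mem hj hk |>.symm]
    have := h.pos _ hx hsupp
    rw [star_dotProduct_mulVec_single_add_single, ← h.symm i hi j hj] at this
    simp only [← ofReal_pow, add_re, add_im, mul_re, mul_im, ofReal_re, ofReal_im] at this
    constructor <;> linarith
  exact Complex.norm_le_max_of_sq_le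
    (sq_lt_mul_of_forall_quadratic_pos fun a b hab => (hform a b hab).1).le
    (sq_lt_mul_of_forall_quadratic_pos fun a b hab => (hform a b hab).2).le

end IsCSPDOn

end CSPDOn

theorem Finset.sup'_eq_sup'_of_forall_exists_le {α β γ : Type*} [LinearOrder γ] {s : Finset α}
    {t : Finset β} (hs : s.Nonempty) (ht : t.Nonempty) {f : α → γ} {g : β → γ}
    (hfg : ∀ a ∈ s, ∃ b ∈ t, f a ≤ g b) (hgf : ∀ b ∈ t, ∃ a ∈ s, g b ≤ f a) :
    s.sup' hs f = t.sup' ht g := by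
  apply le_antisymm
  · refine Finset.sup'_le _ _ fun a ha => ?_
    obtain ⟨b, hb, hab⟩ := hfg a ha
    exact Finset.le_sup'_of_le _ hb hab
  · refine Finset.sup'_le _ _ fun b hb => ?_
    obtain ⟨a, ha, hba⟩ := hgf b hb
    exact Finset.le_sup'_of_le _ ha hba

section Elimination

variable {N : ℕ}

theorem elimStep_mulVec_apply (M : Matrix (Fin N) (Fin N) ℂ) {K i : Fin N} {x : Fin N → ℂ}
    (hx : ∀ j ≤ K, x j = 0) (hi : K < i) :
    (elimStep K M *ᵥ x) i = (M *ᵥ x) i - M i K * (M K K)⁻¹ * (M *ᵥ x) K := by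
  simp only [mulVec, dotProduct, elimStep, Finset.mul_sum, ← Finset.sum_sub_distrib]
  refine Finset.sum_congr rfl fun j _ => ?_
  by_cases hj : K < j
  · simp only [hi, hj, and_self, if_true]; ring
  · simp [hx j (not_lt.mp hj)]

/-- Schur complement identity: on vectors vanishing up to the pivot `K`, the quadratic form of
`elimStep K M` is that of `M` at the vector corrected in coordinate `K` so that `(M y)_K = 0`. -/
theorem star_dotProduct_elimStep_mulVec {M : Matrix (Fin N) (Fin N) ℂ} {K : Fin N}
    (hK : M K K ≠ 0) {x : Fin N → ℂ} (hx : ∀ j ≤ K, x j = 0) :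
    star x ⬝ᵥ elimStep K M *ᵥ x =
      star (x + Pi.single K (-(M K K)⁻¹ * (M *ᵥ x) K)) ⬝ᵥ
        M *ᵥ (x + Pi.single K (-(M K K)⁻¹ * (M *ᵥ x) K)) := by
  set y := x + Pi.single K (-(M K K)⁻¹ * (M *ᵥ x) K)
  have hMy (i : Fin N) : (M *ᵥ y) i = (M *ᵥ x) i - M i K * (M K K)⁻¹ * (M *ᵥ x) K := by
    rw [mulVec_add, Pi.add_apply, mulVec_single, Pi.smul_apply, op_smul_eq_mul, col_apply]
    ring
  simp only [dotProduct]
  refine Finset.sum_congr rfl fun i _ => ?_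
  rcases lt_trichotomy K i with hi | rfl | hi
  · rw [elimStep_mulVec_apply M hx hi, hMy]
    simp [y, hi.ne']
  · rw [hMy]
    simp [hx _ le_rfl, hK]
  · simp [y, hx i hi.le, hi.ne]

theorem isCSPDOn_Ioi_elimStep {M : Matrix (Fin N) (Fin N) ℂ} {K : Fin N}
    (h : IsCSPDOn (Set.Ici K) M) : IsCSPDOn (Set.Ioi K) (elimStep K M) where
  symm i hi j hj := by
    have hKi : K < i := hi
    have hKj : K < j := hj
    simp only [elimStep, hKi, hKj, and_self, if_true]
    rw [h.symm i hKi.le j hKj.le, h.symm i hKi.le K Set.self_mem_Ici,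
      h.symm j hKj.le K Set.self_mem_Ici]
    ring
  pos x hx hxs := by
    have hxK : ∀ j ≤ K, x j = 0 := fun j hj => hxs j (not_lt.mpr hj)
    rw [star_dotProduct_elimStep_mulVec (h.apply_self_ne_zero Set.self_mem_Ici) hxK]
    refine h.pos _ ?_ fun j hj => ?_
    · obtain ⟨i, hi⟩ := Function.ne_iff.mp hx
      have hiK : i ≠ K := fun hiK => hi (hxK i hiK.le)
      exact Function.ne_iff.mpr ⟨i, by simpa [hiK] using hi⟩
    · have hjK : j < K := not_le.mp hj
      simp [hxK j hjK.le, hjK.ne]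

theorem IsCSPD.isCSPDOn_elimIter {A : Matrix (Fin N) (Fin N) ℂ} (hA : IsCSPD A) (k : ℕ) :
    IsCSPDOn {i : Fin N | k ≤ (i : ℕ)} (elimIter A k) := by
  induction k with
  | zero => exact hA.isCSPDOn _
  | succ k ih =>
    rw [elimIter]
    split_ifs with hk
    · exact isCSPDOn_Ioi_elimStep (K := ⟨k, hk⟩) ih
    · exact ih.mono fun i hi => Nat.le_of_succ_le hi

theorem elimIter_succ_apply_of_le (A : Matrix (Fin N) (Fin N) ℂ) {k : ℕ} {i j : Fin N}
    (h : (i : ℕ) ≤ k ∨ (j : ℕ) ≤ k) : elimIter A (k + 1) i j = elimIter A k i j := by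
  rw [elimIter]
  split_ifs with hk
  · rw [elimStep, if_neg]
    rintro ⟨hi, hj⟩
    have hki : k < (i : ℕ) := hi
    have hkj : k < (j : ℕ) := hj
    omega
  · rfl

theorem elimIter_apply_eq_of_le (A : Matrix (Fin N) (Fin N) ℂ) {i j : Fin N} {k m : ℕ}
    (h : (i : ℕ) ≤ k ∨ (j : ℕ) ≤ k) (hkm : k ≤ m) :
    elimIter A m i j = elimIter A k i j := by
  induction m, hkm using Nat.le_induction with
  | base => rfl
  | succ m hkm ih => rw [elimIter_succ_apply_of_le A (by omega), ih]

theorem exists_elimIter_apply_eq_active (A : Matrix (Fin N) (Fin N) ℂ) (k : ℕ) (i j : Fin N) :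
    ∃ m ≤ k, m ≤ (i : ℕ) ∧ m ≤ (j : ℕ) ∧ elimIter A k i j = elimIter A m i j := by
  by_cases hk : k ≤ (i : ℕ) ∧ k ≤ (j : ℕ)
  · exact ⟨k, le_rfl, hk.1, hk.2, rfl⟩
  · refine ⟨min i j, by omega, min_le_left _ _, min_le_right _ _, ?_⟩
    exact elimIter_apply_eq_of_le A (by omega) (by omega)

theorem IsCSPD.exists_norm_elimIter_apply_le {A : Matrix (Fin N) (Fin N) ℂ} (hA : IsCSPD A)
    (k : ℕ) (i j : Fin N) :
    ∃ m ≤ k, ∃ l, ‖elimIter A k i j‖ ≤ ‖elimIter A m l l‖ := by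
  obtain ⟨m, hmk, hmi, hmj, hentry⟩ := exists_elimIter_apply_eq_active A k i j
  have hle := (hA.isCSPDOn_elimIter m).norm_apply_le_max (i := i) (j := j) hmi hmj
  rw [hentry]
  rcases le_max_iff.mp hle with h | h
  exacts [⟨m, hmk, i, h⟩, ⟨m, hmk, j, h⟩]

end Elimination

/-- For a CSPD (Higham) matrix, the growth factor of Gaussian elimination
without pivoting is attained on diagonal entries:
`max_{i,j,k} |a_{ij}^{(k)}| / max_{i,j} |a_{ij}|
  = max_{j,k} |a_{jj}^{(k)}| / max_j |a_{jj}|`. -/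
theorem growth_factor_diagonal_cspd {n : ℕ}
    (A : Matrix (Fin (n + 1)) (Fin (n + 1)) ℂ) (hA : IsCSPD A) :
    ((Finset.range (n + 1)).product
          ((Finset.univ : Finset (Fin (n + 1))).product Finset.univ)).sup'
        (Finset.Nonempty.product ⟨0, by simp⟩
          (Finset.Nonempty.product Finset.univ_nonempty Finset.univ_nonempty))
        (fun p => ‖elimIter A p.1 p.2.1 p.2.2‖) /
      (Finset.univ.sup' Finset.univ_nonempty
        fun p : Fin (n + 1) × Fin (n + 1) => ‖A p.1 p.2‖) =
    ((Finset.range (n + 1)).product (Finset.univ : Finset (Fin (n + 1)))).sup'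
        (Finset.Nonempty.product ⟨0, by simp⟩ Finset.univ_nonempty)
        (fun p => ‖elimIter A p.1 p.2 p.2‖) /
      (Finset.univ.sup' Finset.univ_nonempty
        fun j : Fin (n + 1) => ‖A j j‖) := by
  congr 1
  · refine Finset.sup'_eq_sup'_of_forall_exists_le _ _ (fun ⟨k, i, j⟩ hk => ?_)
      fun ⟨k, j⟩ hk => ⟨(k, j, j), by simpa using hk, le_rfl⟩
    obtain ⟨m, hmk, l, hle⟩ := hA.exists_norm_elimIter_apply_le k i j
    have hkn := Finset.mem_range.mp (Finset.mem_product.mp hk).1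
    have hml : (m, l) ∈ (Finset.range (n + 1)).product Finset.univ :=
      Finset.mem_product.mpr ⟨Finset.mem_range.mpr (by omega), Finset.mem_univ _⟩
    exact ⟨(m, l), hml, hle⟩
  · refine Finset.sup'_eq_sup'_of_forall_exists_le _ _ (fun ⟨i, j⟩ _ => ?_)
      fun j _ => ⟨(j, j), Finset.mem_univ _, le_rfl⟩
    obtain ⟨m, hm, l, hle⟩ := hA.exists_norm_elimIter_apply_le 0 i j
    obtain rfl : m = 0 := Nat.le_zero.mp hm
    exact ⟨l, Finset.mem_univ _, hle⟩
end
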